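/- arXiv:2505.04043 — 7 statements merged into one kernel-verified Lean document; each statement's English description precedes it below -/
import Mathlib

section
/- Let 1 ≤ p < ∞, α > -1, and let φ : (0,∞) → ℝ be measurable with ∫₀^∞ t^{(1+α)/p - 1} |φ(t)| dt < ∞. Then for every f in the weighted Bergman space A^p_α(ℂ₊), the function H_φ f(z) = ∫₀^∞ f(z/t) φ(t)/t dt satisfies ‖H_φ f‖_{A^p_α} ≤ (∫₀^∞ t^{(1+α)/p - 1} |φ(t)| dt) · ‖f‖_{A^p_α}. -/
open MeasureTheory Complex Set Real Filter
open scoped ENNReal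

/-- The upper half-plane. -/
def UHP : Set ℂ := {z : ℂ | 0 < z.im}

/-- The Hausdorff operator on functions of the upper half-plane. -/
noncomputable def Hc (φ : ℝ → ℝ) (f : ℂ → ℂ) (z : ℂ) : ℂ :=
  ∫ t in Ioi (0:ℝ), (φ t / t) • f (z / (t : ℂ))

/-- The weighted Bergman (quasi-)norm `‖f‖_{A^p_α}`. -/
noncomputable def bergN (p α : ℝ) (f : ℂ → ℂ) : ℝ≥0∞ :=
  (∫⁻ x : ℝ, ∫⁻ y in Ioi (0:ℝ),
    ENNReal.ofReal (‖f (x + y * Complex.I)‖ ^ p * y ^ (α - 1))) ^ (1 / p)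

/-- The kernel integral `∫₀^∞ t^{(1+α)/p - 1} |φ(t)| dt`. -/
noncomputable def kern (p α : ℝ) (φ : ℝ → ℝ) : ℝ≥0∞ :=
  ∫⁻ t in Ioi (0:ℝ), ENNReal.ofReal (t ^ ((1 + α) / p - 1) * |φ t|)

private lemma preimage_mul_Ioi_aux (c : ℝ) (hc : 0 < c) :
    (fun x : ℝ => c * x) ⁻¹' Ioi 0 = Ioi 0 := by
  ext x
  simp only [Set.mem_preimage, mem_Ioi]
  constructor
  · intro h; nlinarith
  · intro h; positivity

private lemma lint_scale_line (c : ℝ) (hc : 0 < c) (G : ℝ → ℝ≥0∞)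
    (hG : AEMeasurable G volume) :
    ∫⁻ x : ℝ, G (c⁻¹ * x) = ENNReal.ofReal c * ∫⁻ x : ℝ, G x := by
  have hc' : c⁻¹ ≠ 0 := inv_ne_zero hc.ne'
  have hmap : Measure.map (fun x : ℝ => c⁻¹ * x) volume = ENNReal.ofReal c • volume := by
    rw [Real.map_volume_mul_left hc', inv_inv, abs_of_pos hc]
  have h1 : AEMeasurable G (Measure.map (fun x : ℝ => c⁻¹ * x) volume) := by
    rw [hmap]; exact hG.smul_measure _
  rw [← lintegral_map' h1 (measurable_const_mul c⁻¹).aemeasurable, hmap,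
    lintegral_smul_measure, smul_eq_mul]

private lemma lint_scale_Ioi (c : ℝ) (hc : 0 < c) (G : ℝ → ℝ≥0∞)
    (hG : AEMeasurable G (volume.restrict (Ioi 0))) :
    ∫⁻ x in Ioi (0:ℝ), G (c⁻¹ * x) = ENNReal.ofReal c * ∫⁻ x in Ioi (0:ℝ), G x := by
  have hc' : c⁻¹ ≠ 0 := inv_ne_zero hc.ne'
  have hemb : MeasurableEmbedding (fun x : ℝ => c⁻¹ * x) :=
    (Homeomorph.mulLeft₀ c⁻¹ hc').measurableEmbedding
  have hpre : (fun x : ℝ => c⁻¹ * x) ⁻¹' Ioi 0 = Ioi 0 :=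
    preimage_mul_Ioi_aux c⁻¹ (inv_pos.2 hc)
  have hmap : Measure.map (fun x : ℝ => c⁻¹ * x) (volume.restrict (Ioi 0))
      = ENNReal.ofReal c • volume.restrict (Ioi 0) := by
    conv_lhs => rw [← hpre]
    rw [← hemb.restrict_map, Real.map_volume_mul_left hc', inv_inv, abs_of_pos hc,
      Measure.restrict_smul]
  have h1 : AEMeasurable G (Measure.map (fun x : ℝ => c⁻¹ * x) (volume.restrict (Ioi 0))) := by
    rw [hmap]; exact hG.smul_measure _
  rw [← lintegral_map' h1 (measurable_const_mul c⁻¹).aemeasurable, hmap,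
    lintegral_smul_measure, smul_eq_mul]

private lemma holder_w {X : Type*} [MeasurableSpace X] (μ : Measure X) (p : ℝ) (hp : 1 ≤ p)
    (G W : X → ℝ≥0∞) (hG : AEMeasurable G μ) (hW : AEMeasurable W μ)
    (hWt : ∀ x, W x ≠ ⊤) :
    ∫⁻ x, G x * W x ∂μ ≤
      (∫⁻ x, G x ^ p * W x ∂μ) ^ (1/p) * (∫⁻ x, W x ∂μ) ^ (1 - 1/p) := by
  rcases eq_or_lt_of_le hp with heq | hlt
  · simp only [← heq]
    norm_num
  · have hppos : (0:ℝ) < p := lt_trans one_pos hlt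
    set q := p.conjExponent with hqdef
    have hpq : p.HolderConjugate q := Real.HolderConjugate.conjExponent hlt
    have hqpos : (0:ℝ) < q := hpq.symm.pos
    have hsum : 1/p + 1/q = 1 := by rw [one_div, one_div]; exact hpq.inv_add_inv_eq_one
    have h2 := ENNReal.lintegral_mul_le_Lp_mul_Lq μ hpq
      (f := fun x => G x * W x ^ (1/p)) (g := fun x => W x ^ (1/q))
      (hG.mul (hW.pow_const _)) (hW.pow_const _)
    have key1 : ∀ x, (G x * W x ^ (1/p)) * (W x ^ (1/q)) = G x * W x := by
      intro x
      rcases eq_or_ne (W x) 0 with h0 | h0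
      · simp [h0, ENNReal.zero_rpow_of_pos (by positivity : (0:ℝ) < 1/p),
          ENNReal.zero_rpow_of_pos (by positivity : (0:ℝ) < 1/q)]
        exact Or.inr hqpos
      · rw [mul_assoc, ← ENNReal.rpow_add _ _ h0 (hWt x), hsum, ENNReal.rpow_one]
    have key2 : ∀ x, (G x * W x ^ (1/p)) ^ p = G x ^ p * W x := by
      intro x
      rw [ENNReal.mul_rpow_of_nonneg _ _ hppos.le, ← ENNReal.rpow_mul,
        one_div_mul_cancel hppos.ne', ENNReal.rpow_one]
    have key3 : ∀ x, (W x ^ (1/q)) ^ q = W x := by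
      intro x
      rw [← ENNReal.rpow_mul, one_div_mul_cancel hqpos.ne', ENNReal.rpow_one]
    have hq' : 1/q = 1 - 1/p := by linarith
    calc ∫⁻ x, G x * W x ∂μ
        = ∫⁻ x, ((fun x => G x * W x ^ (1/p)) * fun x => W x ^ (1/q)) x ∂μ := by
          apply lintegral_congr; intro x; simp only [Pi.mul_apply]; rw [key1]
      _ ≤ (∫⁻ x, (G x * W x ^ (1/p)) ^ p ∂μ) ^ (1/p) *
            (∫⁻ x, (W x ^ (1/q)) ^ q ∂μ) ^ (1/q) := h2
      _ = (∫⁻ x, G x ^ p * W x ∂μ) ^ (1/p) * (∫⁻ x, W x ∂μ) ^ (1 - 1/p) := by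
          rw [← hq']
          congr 1
          · congr 1; exact lintegral_congr key2
          · congr 1; exact lintegral_congr key3

private lemma berg_eq (p α : ℝ) (hp0 : 0 < p) (h k : ℂ → ℂ)
    (hk : ∀ x y : ℝ, 0 < y → h ((x:ℂ) + (y:ℂ) * Complex.I) = k ((x:ℂ) + (y:ℂ) * Complex.I)) :
    bergN p α h = (∫⁻ x : ℝ, ∫⁻ y in Ioi (0:ℝ),
      (‖k ((x:ℂ) + (y:ℂ) * Complex.I)‖₊ : ℝ≥0∞) ^ p * ENNReal.ofReal (y ^ (α - 1))) ^ (1/p) := by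
  unfold bergN
  congr 1
  refine lintegral_congr fun x => ?_
  refine setLIntegral_congr_fun measurableSet_Ioi (fun y hy => ?_)
  rw [hk x y hy, ENNReal.ofReal_mul (by positivity),
    ← ENNReal.ofReal_rpow_of_nonneg (norm_nonneg _) hp0.le, ofReal_norm, enorm_eq_nnnorm]

private lemma point_bound (p α : ℝ) (hp : 1 ≤ p) (φ : ℝ → ℝ) (hφ : Measurable φ)
    (g : ℂ → ℂ) (hg : Measurable g) (z : ℂ) :
    (‖Hc φ g z‖₊ : ℝ≥0∞) ^ p ≤
      (kern p α φ) ^ (p - 1) *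
      ∫⁻ t in Ioi (0:ℝ), (‖g (z/(t:ℂ))‖₊:ℝ≥0∞)^p * ENNReal.ofReal (t ^ (-(1+α)))
        * ENNReal.ofReal (t ^ ((1+α)/p - 1) * |φ t|) := by
  have hp0 : (0:ℝ) < p := lt_of_lt_of_le one_pos hp
  set β : ℝ := (1+α)/p with hβ
  set Wf : ℝ → ℝ≥0∞ := fun t => ENNReal.ofReal (t ^ (β - 1) * |φ t|) with hW
  set G : ℝ → ℝ≥0∞ := fun t => (‖g (z/(t:ℂ))‖₊:ℝ≥0∞) * ENNReal.ofReal (t ^ (-β)) with hG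
  have hGm : AEMeasurable G (volume.restrict (Ioi 0)) := by
    apply Measurable.aemeasurable
    rw [hG]
    apply Measurable.mul (f := fun t : ℝ => (‖g (z/(t:ℂ))‖₊:ℝ≥0∞))
      (g := fun t : ℝ => ENNReal.ofReal (t ^ (-β))) ?_ (by fun_prop)
    exact (hg.comp (measurable_const.div Complex.measurable_ofReal)).nnnorm.coe_nnreal_ennreal
  have hWm : AEMeasurable Wf (volume.restrict (Ioi 0)) := by
    apply Measurable.aemeasurable
    apply Measurable.ennreal_ofReal
    exact (by fun_prop : Measurable fun t : ℝ => t ^ (β-1)).mul hφ.abs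
  have hkern : kern p α φ = ∫⁻ t in Ioi (0:ℝ), Wf t := rfl
  have step1 : (‖Hc φ g z‖₊ : ℝ≥0∞) ≤ ∫⁻ t in Ioi (0:ℝ), G t * Wf t := by
    refine le_trans (enorm_integral_le_lintegral_enorm _) (le_of_eq ?_)
    simp only [enorm_eq_nnnorm]
    refine setLIntegral_congr_fun measurableSet_Ioi (fun t ht => ?_)
    have ht0 : (0:ℝ) < t := ht
    rw [nnnorm_smul, ENNReal.coe_mul, ← enorm_eq_nnnorm, Real.enorm_eq_ofReal_abs]
    rw [show ENNReal.ofReal |φ t / t| = ENNReal.ofReal (t^(-β)) * Wf t from ?_]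
    · simp only [hG]; ring
    · rw [hW, ← ENNReal.ofReal_mul (by positivity)]
      congr 1
      rw [abs_div, abs_of_pos ht0, ← mul_assoc, ← Real.rpow_add ht0,
        show -β + (β-1) = -1 by ring, Real.rpow_neg_one]
      ring
  have step2 := holder_w (volume.restrict (Ioi 0)) p hp G Wf hGm hWm
    (fun t => ENNReal.ofReal_ne_top)
  have step3 : (‖Hc φ g z‖₊ : ℝ≥0∞)^p ≤
      (kern p α φ) ^ (p-1) * ∫⁻ t in Ioi (0:ℝ), G t ^ p * Wf t := by
    refine le_trans (ENNReal.rpow_le_rpow (le_trans step1 step2) hp0.le) (le_of_eq ?_)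
    rw [ENNReal.mul_rpow_of_nonneg _ _ hp0.le, ← ENNReal.rpow_mul, ← ENNReal.rpow_mul,
      one_div_mul_cancel hp0.ne', ENNReal.rpow_one,
      show (1 - 1/p) * p = p - 1 by field_simp, ← hkern, mul_comm]
  refine le_trans step3 (le_of_eq ?_)
  congr 1
  refine setLIntegral_congr_fun measurableSet_Ioi (fun t ht => ?_)
  have ht0 : (0:ℝ) < t := ht
  rw [hG, hW]
  rw [ENNReal.mul_rpow_of_nonneg _ _ hp0.le,
    ENNReal.ofReal_rpow_of_nonneg (by positivity) hp0.le,
    ← Real.rpow_mul ht0.le, show -β * p = -(1+α) by rw [hβ]; field_simp]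

private lemma hgm_pair (g : ℂ → ℂ) (hg : Measurable g) (p α : ℝ) :
    Measurable fun q : ℝ × ℝ =>
      (‖g ((q.1:ℂ) + (q.2:ℂ)*Complex.I)‖₊ : ℝ≥0∞)^p * ENNReal.ofReal (q.2 ^ (α-1)) := by
  apply Measurable.mul ?_ (by fun_prop)
  exact ((hg.comp (by fun_prop)).nnnorm.coe_nnreal_ennreal).pow_const _

private lemma dilation (p α : ℝ) (g : ℂ → ℂ) (hg : Measurable g)
    (t : ℝ) (ht : 0 < t) :
    ∫⁻ x : ℝ, ∫⁻ y in Ioi (0:ℝ), (‖g (((x:ℂ) + (y:ℂ)*Complex.I)/(t:ℂ))‖₊:ℝ≥0∞)^p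
        * ENNReal.ofReal (y^(α-1))
      = ENNReal.ofReal (t^(1+α)) *
        ∫⁻ x : ℝ, ∫⁻ y in Ioi (0:ℝ), (‖g ((x:ℂ) + (y:ℂ)*Complex.I)‖₊:ℝ≥0∞)^p
          * ENNReal.ofReal (y^(α-1)) := by
  have htne : t ≠ 0 := ht.ne'
  set Binner : ℝ → ℝ≥0∞ := fun x => ∫⁻ y in Ioi (0:ℝ),
    (‖g ((x:ℂ) + (y:ℂ)*Complex.I)‖₊:ℝ≥0∞)^p * ENNReal.ofReal (y^(α-1)) with hBi
  have hBm : Measurable Binner :=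
    Measurable.lintegral_prod_right' (hgm_pair g hg p α)
  have key : ∀ x : ℝ,
      (∫⁻ y in Ioi (0:ℝ), (‖g (((x:ℂ)+(y:ℂ)*Complex.I)/(t:ℂ))‖₊:ℝ≥0∞)^p
        * ENNReal.ofReal (y^(α-1)))
      = ENNReal.ofReal (t^α) * Binner (t⁻¹ * x) := by
    intro x
    have e1 : ∀ y ∈ Ioi (0:ℝ),
        (‖g (((x:ℂ)+(y:ℂ)*Complex.I)/(t:ℂ))‖₊:ℝ≥0∞)^p * ENNReal.ofReal (y^(α-1))
          = ENNReal.ofReal (t^(α-1)) *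
            ((‖g (((t⁻¹*x : ℝ):ℂ) + ((t⁻¹*y : ℝ):ℂ)*Complex.I)‖₊:ℝ≥0∞)^p
              * ENNReal.ofReal ((t⁻¹*y)^(α-1))) := by
      intro y hy
      have hy0 : (0:ℝ) < y := hy
      have hdv : ((x:ℂ) + (y:ℂ)*Complex.I)/(t:ℂ)
          = ((t⁻¹*x : ℝ):ℂ) + ((t⁻¹*y : ℝ):ℂ)*Complex.I := by
        push_cast
        field_simp
      rw [hdv, show ENNReal.ofReal (y^(α-1))
          = ENNReal.ofReal (t^(α-1)) * ENNReal.ofReal ((t⁻¹*y)^(α-1)) from ?_]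
      · ring
      · rw [← ENNReal.ofReal_mul (by positivity)]
        congr 1
        rw [Real.mul_rpow (by positivity) hy0.le, ← mul_assoc,
          ← Real.mul_rpow ht.le (by positivity), mul_inv_cancel₀ htne, Real.one_rpow, one_mul]
    rw [setLIntegral_congr_fun measurableSet_Ioi e1,
      lintegral_const_mul' _ _ ENNReal.ofReal_ne_top]
    have hsc := lint_scale_Ioi t ht
      (fun y => (‖g (((t⁻¹*x : ℝ):ℂ) + (y:ℂ)*Complex.I)‖₊:ℝ≥0∞)^p * ENNReal.ofReal (y^(α-1)))
      (((hgm_pair g hg p α).comp (measurable_const.prodMk measurable_id)).aemeasurable)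
    rw [hsc, ← mul_assoc, ← ENNReal.ofReal_mul (by positivity)]
    congr 2
    rw [← Real.rpow_add_one htne (α-1)]
    norm_num
  rw [lintegral_congr key, lintegral_const_mul' _ _ ENNReal.ofReal_ne_top,
    lint_scale_line t ht Binner hBm.aemeasurable, ← mul_assoc,
    ← ENNReal.ofReal_mul (by positivity)]
  congr 2
  rw [← Real.rpow_add_one htne α, add_comm]

private lemma fubini3 (F : ℝ × ℝ × ℝ → ℝ≥0∞) (hF : Measurable F) :
    ∫⁻ x : ℝ, ∫⁻ y in Ioi (0:ℝ), ∫⁻ t in Ioi (0:ℝ), F (x, y, t)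
      = ∫⁻ t in Ioi (0:ℝ), ∫⁻ x : ℝ, ∫⁻ y in Ioi (0:ℝ), F (x, y, t) := by
  have h1 : ∀ x : ℝ, ∫⁻ y in Ioi (0:ℝ), ∫⁻ t in Ioi (0:ℝ), F (x, y, t)
      = ∫⁻ t in Ioi (0:ℝ), ∫⁻ y in Ioi (0:ℝ), F (x, y, t) := fun x =>
    lintegral_lintegral_swap ((hF.comp (measurable_const.prodMk measurable_id)).aemeasurable)
  have h2 : Measurable fun q : ℝ × ℝ => ∫⁻ y in Ioi (0:ℝ), F (q.1, y, q.2) :=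
    Measurable.lintegral_prod_right' (f := fun r : (ℝ × ℝ) × ℝ => F (r.1.1, r.2, r.1.2))
      (hF.comp (by fun_prop))
  calc ∫⁻ x : ℝ, ∫⁻ y in Ioi (0:ℝ), ∫⁻ t in Ioi (0:ℝ), F (x, y, t)
      = ∫⁻ x : ℝ, ∫⁻ t in Ioi (0:ℝ), ∫⁻ y in Ioi (0:ℝ), F (x, y, t) := lintegral_congr h1
    _ = ∫⁻ t in Ioi (0:ℝ), ∫⁻ x : ℝ, ∫⁻ y in Ioi (0:ℝ), F (x, y, t) :=
        lintegral_lintegral_swap h2.aemeasurable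

theorem stmt0 (p α : ℝ) (hp : 1 ≤ p) (hα : -1 < α) (φ : ℝ → ℝ)
    (hφ : Measurable φ) (hker : kern p α φ < ⊤)
    (f : ℂ → ℂ) (hf : DifferentiableOn ℂ f UHP) (hfN : bergN p α f < ⊤) :
    bergN p α (Hc φ f) ≤ kern p α φ * bergN p α f := by
  classical
  have hp0 : (0:ℝ) < p := lt_of_lt_of_le one_pos hp
  have hUHPm : MeasurableSet UHP :=
    (isOpen_lt continuous_const Complex.continuous_im).measurableSet
  set g : ℂ → ℂ := UHP.piecewise f (fun _ => 0) with hgdef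
  have hgmeas : Measurable g :=
    ContinuousOn.measurable_piecewise hf.continuousOn continuousOn_const hUHPm
  have hgeq : ∀ z ∈ UHP, g z = f z := fun z hz => Set.piecewise_eq_of_mem _ _ _ hz
  have hmem : ∀ x y : ℝ, 0 < y → (x:ℂ) + (y:ℂ) * Complex.I ∈ UHP := by
    intro x y hy
    show 0 < ((x:ℂ) + (y:ℂ)*Complex.I).im
    simpa using hy
  have hdivmem : ∀ x y t : ℝ, 0 < y → 0 < t →
      ((x:ℂ) + (y:ℂ)*Complex.I)/(t:ℂ) ∈ UHP := by
    intro x y t hy ht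
    have htne : t ≠ 0 := ht.ne'
    have : ((x:ℂ) + (y:ℂ)*Complex.I)/(t:ℂ)
        = ((x/t : ℝ):ℂ) + ((y/t : ℝ):ℂ)*Complex.I := by
      push_cast; field_simp
    rw [this]; exact hmem _ _ (div_pos hy ht)
  have hHceq : ∀ x y : ℝ, 0 < y →
      Hc φ f ((x:ℂ) + (y:ℂ)*Complex.I) = Hc φ g ((x:ℂ)+(y:ℂ)*Complex.I) := by
    intro x y hy
    unfold Hc
    refine setIntegral_congr_fun measurableSet_Ioi fun t ht => ?_
    rw [hgeq _ (hdivmem x y t hy ht)]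
  have hfg : ∀ x y : ℝ, 0 < y →
      f ((x:ℂ)+(y:ℂ)*Complex.I) = g ((x:ℂ)+(y:ℂ)*Complex.I) :=
    fun x y hy => (hgeq _ (hmem x y hy)).symm
  set B : ℝ≥0∞ := ∫⁻ x : ℝ, ∫⁻ y in Ioi (0:ℝ),
    (‖g ((x:ℂ) + (y:ℂ)*Complex.I)‖₊ : ℝ≥0∞)^p * ENNReal.ofReal (y^(α-1)) with hBdef
  have hBf : bergN p α f = B ^ (1/p) := berg_eq p α hp0 f g hfg
  have hBlt : B ≠ ⊤ := by
    rw [hBf] at hfN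
    exact ((ENNReal.rpow_lt_top_iff_of_pos (by positivity)).1 hfN).ne
  set K : ℝ≥0∞ := kern p α φ with hKdef
  have hKne : K ≠ ⊤ := hker.ne
  have hKp1ne : K ^ (p-1) ≠ ⊤ := ENNReal.rpow_ne_top_of_nonneg (by linarith) hKne
  have hHg : bergN p α (Hc φ f) = (∫⁻ x : ℝ, ∫⁻ y in Ioi (0:ℝ),
      (‖Hc φ g ((x:ℂ) + (y:ℂ)*Complex.I)‖₊ : ℝ≥0∞)^p * ENNReal.ofReal (y^(α-1)))^(1/p) :=
    berg_eq p α hp0 (Hc φ f) (Hc φ g) hHceq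
  -- the kernel of the triple integral
  set F : ℝ × ℝ × ℝ → ℝ≥0∞ := fun q =>
    ((‖g (((q.1:ℂ) + (q.2.1:ℂ)*Complex.I)/((q.2.2:ℂ)))‖₊:ℝ≥0∞)^p
      * ENNReal.ofReal (q.2.2 ^ (-(1+α)))
      * ENNReal.ofReal (q.2.2 ^ ((1+α)/p - 1) * |φ q.2.2|))
      * ENNReal.ofReal (q.2.1^(α-1)) with hFdef
  have hFm : Measurable F := by
    refine Measurable.mul (Measurable.mul (Measurable.mul ?_ (by fun_prop)) ?_) (by fun_prop)
    · exact ((hgmeas.comp (by apply Measurable.div <;> fun_prop)).nnnorm.coe_nnreal_ennreal).pow_const _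
    · exact (Measurable.mul (by fun_prop) ((hφ.comp measurable_snd.snd).abs)).ennreal_ofReal
  set Θ : ℝ → ℝ → ℝ≥0∞ := fun x y => ∫⁻ t in Ioi (0:ℝ),
    (‖g (((x:ℂ)+(y:ℂ)*Complex.I)/(t:ℂ))‖₊:ℝ≥0∞)^p * ENNReal.ofReal (t^(-(1+α)))
      * ENNReal.ofReal (t^((1+α)/p-1) * |φ t|) with hΘdef
  have main : (∫⁻ x : ℝ, ∫⁻ y in Ioi (0:ℝ),
      (‖Hc φ g ((x:ℂ) + (y:ℂ)*Complex.I)‖₊ : ℝ≥0∞)^p * ENNReal.ofReal (y^(α-1)))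
      ≤ K^(p-1) * (K * B) := by
    have stepI : (∫⁻ x : ℝ, ∫⁻ y in Ioi (0:ℝ),
        (‖Hc φ g ((x:ℂ) + (y:ℂ)*Complex.I)‖₊ : ℝ≥0∞)^p * ENNReal.ofReal (y^(α-1)))
        ≤ ∫⁻ x : ℝ, ∫⁻ y in Ioi (0:ℝ), K^(p-1) * (Θ x y * ENNReal.ofReal (y^(α-1))) := by
      refine lintegral_mono fun x => lintegral_mono fun y => ?_
      rw [← mul_assoc]
      exact mul_le_mul_left (point_bound p α hp φ hφ g hgmeas _) _
    refine le_trans stepI (le_of_eq ?_)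
    have stepII : (∫⁻ x : ℝ, ∫⁻ y in Ioi (0:ℝ),
        K^(p-1) * (Θ x y * ENNReal.ofReal (y^(α-1))))
        = K^(p-1) * ∫⁻ x : ℝ, ∫⁻ y in Ioi (0:ℝ), Θ x y * ENNReal.ofReal (y^(α-1)) := by
      rw [← lintegral_const_mul' _ _ hKp1ne]
      exact lintegral_congr fun x => lintegral_const_mul' _ _ hKp1ne
    rw [stepII]
    congr 1
    have stepIII : ∀ (x y : ℝ), Θ x y * ENNReal.ofReal (y^(α-1))
        = ∫⁻ t in Ioi (0:ℝ), F (x, y, t) :=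
      fun x y => (lintegral_mul_const' _ _ ENNReal.ofReal_ne_top).symm
    calc (∫⁻ x : ℝ, ∫⁻ y in Ioi (0:ℝ), Θ x y * ENNReal.ofReal (y^(α-1)))
        = ∫⁻ x : ℝ, ∫⁻ y in Ioi (0:ℝ), ∫⁻ t in Ioi (0:ℝ), F (x, y, t) := by
          exact lintegral_congr fun x => lintegral_congr fun y => stepIII x y
      _ = ∫⁻ t in Ioi (0:ℝ), ∫⁻ x : ℝ, ∫⁻ y in Ioi (0:ℝ), F (x, y, t) := fubini3 F hFm
      _ = K * B := ?_
    have hKB : K * B = ∫⁻ t in Ioi (0:ℝ), ENNReal.ofReal (t^((1+α)/p-1) * |φ t|) * B := by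
      rw [hKdef]; exact (lintegral_mul_const' B _ hBlt).symm
    rw [hKB]
    refine setLIntegral_congr_fun measurableSet_Ioi (fun t ht => ?_)
    have ht0 : (0:ℝ) < t := ht
    have hC : ENNReal.ofReal (t ^ (-(1+α))) * ENNReal.ofReal (t^((1+α)/p-1) * |φ t|) ≠ ⊤ :=
      ENNReal.mul_ne_top ENNReal.ofReal_ne_top ENNReal.ofReal_ne_top
    have stepV : (∫⁻ x : ℝ, ∫⁻ y in Ioi (0:ℝ), F (x, y, t))
        = (ENNReal.ofReal (t ^ (-(1+α))) * ENNReal.ofReal (t^((1+α)/p-1) * |φ t|))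
          * (ENNReal.ofReal (t^(1+α)) * B) := by
      have e : ∀ x y : ℝ, F (x, y, t)
          = (ENNReal.ofReal (t ^ (-(1+α))) * ENNReal.ofReal (t^((1+α)/p-1) * |φ t|))
            * ((‖g (((x:ℂ)+(y:ℂ)*Complex.I)/(t:ℂ))‖₊:ℝ≥0∞)^p * ENNReal.ofReal (y^(α-1))) := by
        intro x y; rw [hFdef]; ring
      calc (∫⁻ x : ℝ, ∫⁻ y in Ioi (0:ℝ), F (x, y, t))
          = (ENNReal.ofReal (t ^ (-(1+α))) * ENNReal.ofReal (t^((1+α)/p-1) * |φ t|))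
            * ∫⁻ x : ℝ, ∫⁻ y in Ioi (0:ℝ),
              (‖g (((x:ℂ)+(y:ℂ)*Complex.I)/(t:ℂ))‖₊:ℝ≥0∞)^p * ENNReal.ofReal (y^(α-1)) := by
            rw [← lintegral_const_mul' _ _ hC]
            refine lintegral_congr fun x => ?_
            rw [← lintegral_const_mul' _ _ hC]
            exact lintegral_congr fun y => e x y
        _ = _ := by rw [dilation p α g hgmeas t ht0, hBdef]
    rw [stepV]
    have : ENNReal.ofReal (t ^ (-(1+α))) * ENNReal.ofReal (t^(1+α)) = 1 := by
      rw [← ENNReal.ofReal_mul (by positivity), ← Real.rpow_add ht0, neg_add_cancel,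
        Real.rpow_zero, ENNReal.ofReal_one]
    calc (ENNReal.ofReal (t ^ (-(1+α))) * ENNReal.ofReal (t^((1+α)/p-1) * |φ t|))
          * (ENNReal.ofReal (t^(1+α)) * B)
        = (ENNReal.ofReal (t ^ (-(1+α))) * ENNReal.ofReal (t^(1+α)))
            * (ENNReal.ofReal (t^((1+α)/p-1) * |φ t|) * B) := by ring
      _ = ENNReal.ofReal (t^((1+α)/p-1) * |φ t|) * B := by rw [this, one_mul]
  -- conclude
  rw [hHg, hBf]
  refine le_trans (ENNReal.rpow_le_rpow main (by positivity)) (le_of_eq ?_)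
  rcases eq_or_ne K 0 with hK0 | hK0
  · simp [hK0, hp0, ENNReal.zero_rpow_of_pos (show (0:ℝ) < 1/p by positivity)]
  · have h1 : K ^ (p-1) * K = K ^ p := by
      have h2 := ENNReal.rpow_add (p-1) 1 hK0 hKne
      rw [ENNReal.rpow_one] at h2
      rw [← h2, show p - 1 + 1 = p by ring]
    rw [← mul_assoc, h1, ENNReal.mul_rpow_of_nonneg _ _ (by positivity : (0:ℝ) ≤ 1/p),
      ← ENNReal.rpow_mul, mul_one_div_cancel hp0.ne', ENNReal.rpow_one]
end

section
/- Let 1 ≤ p < ∞, α > 0, and let φ be measurable on (0,∞) with ∫₀^∞ t^{(1+α)/p - 1}|φ(t)| dt < ∞. Then for every f ∈ A^p_α(ℂ₊), the Hausdorff operator H_φ f is holomorphic on ℂ₊ and (H_φ f)'(z) = ∫₀^∞ f'(z/t) φ(t)/t² dt for all z ∈ ℂ₊. -/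
open MeasureTheory Complex Set Real Filter
open scoped ENNReal

lemma isOpen_UHP : IsOpen UHP := isOpen_lt continuous_const Complex.continuous_im

lemma hsIndicatorMeasurable {X Y : Type*} [TopologicalSpace X] [MeasurableSpace X]
    [OpensMeasurableSpace X] [TopologicalSpace Y] [MeasurableSpace Y] [BorelSpace Y] [Zero Y]
    {U : Set X} (hU : IsOpen U) {h : X → Y} (hh : ContinuousOn h U) :
    Measurable (U.indicator h) := by
  apply measurable_of_measurable_union_cover U Uᶜ hU.measurableSet hU.measurableSet.compl
    (by simp)
  · have e : (fun a : U => U.indicator h a) = U.restrict h := by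
      funext a; exact Set.indicator_of_mem a.2 h
    rw [e]
    exact hh.restrict.measurable
  · have e : (fun a : ↥Uᶜ => U.indicator h a) = fun _ => 0 := by
      funext a; exact Set.indicator_of_notMem a.2 h
    rw [e]; exact measurable_const

lemma hsHolder {X : Type*} [MeasurableSpace X] (μ : Measure X) {p : ℝ} (hp : 1 ≤ p)
    {g : X → ℝ≥0∞} (hg : AEMeasurable g μ) :
    (∫⁻ x, g x ∂μ) ^ p ≤ (μ univ) ^ (p - 1) * ∫⁻ x, g x ^ p ∂μ := by
  rcases eq_or_lt_of_le hp with rfl | hp1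
  · simp
  have hp0 : (0:ℝ) < p := lt_trans one_pos hp1
  have hp1' : p - 1 ≠ 0 := sub_ne_zero.2 hp1.ne'
  have hpq : p.HolderConjugate (p / (p - 1)) :=
    (Real.holderConjugate_iff_eq_conjExponent hp1).2 rfl
  have key := ENNReal.lintegral_mul_le_Lp_mul_Lq μ hpq hg
    (aemeasurable_const (b := (1:ℝ≥0∞)))
  simp only [Pi.mul_apply, mul_one, ENNReal.one_rpow, lintegral_one] at key
  have h2 := ENNReal.rpow_le_rpow key hp0.le
  rw [ENNReal.mul_rpow_of_nonneg _ _ hp0.le, ← ENNReal.rpow_mul, ← ENNReal.rpow_mul,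
    one_div_mul_cancel hp0.ne', ENNReal.rpow_one] at h2
  have e : 1 / (p / (p - 1)) * p = p - 1 := by rw [one_div_div, div_mul_cancel₀ _ hp0.ne']
  rw [e] at h2
  calc (∫⁻ x, g x ∂μ) ^ p ≤ (∫⁻ x, g x ^ p ∂μ) * (μ univ) ^ (p - 1) := h2
  _ = (μ univ) ^ (p - 1) * ∫⁻ x, g x ^ p ∂μ := mul_comm _ _

lemma hsPolar {S : Set (ℝ × ℝ)} (hS : MeasurableSet S) (hS' : S ⊆ polarCoord.target)
    (g : ℝ × ℝ → ℝ≥0∞) :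
    ∫⁻ p in S, ENNReal.ofReal p.1 * g (polarCoord.symm p) ≤ ∫⁻ q, g q := by
  set B : ℝ × ℝ → ℝ × ℝ →L[ℝ] ℝ × ℝ := fun p =>
    LinearMap.toContinuousLinearMap (Matrix.toLin (Module.Basis.finTwoProd ℝ) (Module.Basis.finTwoProd ℝ)
      !![Real.cos p.2, -p.1 * Real.sin p.2; Real.sin p.2, p.1 * Real.cos p.2]) with hB
  have hder : ∀ p ∈ S, HasFDerivWithinAt (↑polarCoord.symm) (B p) S p := fun p _ =>
    (hasFDerivAt_polarCoord_symm p).hasFDerivWithinAt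
  have hinj : InjOn (↑polarCoord.symm) S :=
    polarCoord.symm.injOn.mono (by rw [OpenPartialHomeomorph.symm_source]; exact hS')
  have B_det : ∀ p, (B p).det = p.1 := by
    intro p
    conv_rhs => rw [← one_mul p.1, ← Real.cos_sq_add_sin_sq p.2]
    simp only [hB, neg_mul, LinearMap.det_toContinuousLinearMap, LinearMap.det_toLin,
      Matrix.det_fin_two_of, sub_neg_eq_add]
    ring
  have himg := lintegral_image_eq_lintegral_abs_det_fderiv_mul volume hS hder hinj g
  calc ∫⁻ p in S, ENNReal.ofReal p.1 * g (polarCoord.symm p)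
      = ∫⁻ p in S, ENNReal.ofReal |(B p).det| * g (polarCoord.symm p) := by
        refine setLIntegral_congr_fun hS (fun p hp => ?_)
        have hmem := hS' hp
        rw [polarCoord_target] at hmem
        rw [B_det, abs_of_pos (hmem.1 : (0:ℝ) < p.1)]
    _ = ∫⁻ q in (↑polarCoord.symm) '' S, g q := himg.symm
    _ ≤ ∫⁻ q, g q := setLIntegral_le_lintegral _ _

lemma hsClosedBallSubset {z : ℂ} {s : ℝ} (hsz : s < z.im) :
    Metric.closedBall z s ⊆ UHP := by
  intro w hw
  rw [Metric.mem_closedBall, Complex.dist_eq] at hw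
  have h1 : |(w - z).im| ≤ ‖w - z‖ := Complex.abs_im_le_norm _
  have h2 : (w - z).im = w.im - z.im := Complex.sub_im w z
  have : -(s) ≤ w.im - z.im := by
    have := (abs_le.1 (h1.trans hw)).1; rw [h2] at this; linarith
  show 0 < w.im
  linarith

lemma hsMeanValue {f : ℂ → ℂ} (hf : DifferentiableOn ℂ f UHP) {z : ℂ} {s : ℝ}
    (hs : 0 < s) (hsz : s < z.im) :
    ∫ θ in (-π)..π, f (circleMap z s θ) = ((2 * π : ℝ) : ℂ) * f z := by
  have hball : Metric.closedBall z s ⊆ UHP := hsClosedBallSubset hsz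
  have h := (hf.mono hball).circleIntegral_sub_inv_smul (Metric.mem_ball_self hs)
  rw [circleIntegral] at h
  have key : ∀ θ : ℝ, deriv (circleMap z s) θ • (circleMap z s θ - z)⁻¹ • f (circleMap z s θ)
      = I * f (circleMap z s θ) := by
    intro θ
    have h0 : circleMap 0 s θ ≠ 0 := by
      simpa [circleMap_eq_center_iff] using hs.ne'
    rw [deriv_circleMap, circleMap_sub_center, smul_eq_mul, smul_eq_mul]
    field_simp
  simp only [key] at h
  rw [intervalIntegral.integral_const_mul] at h
  have h2π : (∫ θ in (0:ℝ)..2*π, f (circleMap z s θ)) = ((2 * π : ℝ) : ℂ) * f z := by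
    have hI : (I : ℂ) ≠ 0 := I_ne_zero
    have := h
    rw [smul_eq_mul] at this
    -- this : I * ∫ = 2 * π * I * f z
    apply mul_left_cancel₀ hI
    rw [this]; push_cast; ring
  have hper : Function.Periodic (fun θ => f (circleMap z s θ)) (2*π) :=
    (periodic_circleMap z s).comp f
  have := hper.intervalIntegral_add_eq (-π) 0
  rw [show -π + 2*π = π by ring] at this
  rw [this, zero_add, h2π]

lemma hsCircleEst {p : ℝ} (hp : 1 ≤ p) {f : ℂ → ℂ} (hf : DifferentiableOn ℂ f UHP)
    {z : ℂ} {s : ℝ} (hs : 0 < s) (hsz : s < z.im) :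
    ENNReal.ofReal (‖f z‖ ^ p) * ENNReal.ofReal (2 * π) ≤
      ∫⁻ θ in Ioo (-π) π, ENNReal.ofReal (‖f (circleMap z s θ)‖ ^ p) := by
  have hπ : (0:ℝ) < 2 * π := by positivity
  have hp0 : (0:ℝ) < p := lt_of_lt_of_le one_pos hp
  have hcont : Continuous fun θ : ℝ => f (circleMap z s θ) := by
    refine hf.continuousOn.comp_continuous (continuous_circleMap z s) fun θ => ?_
    apply hsClosedBallSubset hsz
    rw [Metric.mem_closedBall, Complex.dist_eq, circleMap_sub_center]
    simp [norm_circleMap_zero, abs_of_pos hs]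
  have h1 : 2 * π * ‖f z‖ ≤ ∫ θ in Ioo (-π) π, ‖f (circleMap z s θ)‖ := by
    have hmv := hsMeanValue hf hs hsz
    have he : ‖∫ θ in (-π)..π, f (circleMap z s θ)‖ = 2 * π * ‖f z‖ := by
      rw [hmv, norm_mul, Complex.norm_real, Real.norm_eq_abs, abs_of_pos hπ]
    have h2 := intervalIntegral.norm_integral_le_integral_norm (μ := volume)
      (f := fun θ => f (circleMap z s θ)) (by linarith [Real.pi_pos] : -π ≤ π)
    rw [he] at h2
    rwa [intervalIntegral.integral_of_le (by linarith [Real.pi_pos] : -π ≤ π),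
      integral_Ioc_eq_integral_Ioo] at h2
  have hInt : IntegrableOn (fun θ => ‖f (circleMap z s θ)‖) (Ioo (-π) π) volume :=
    (hcont.norm.integrableOn_Icc).mono_set Ioo_subset_Icc_self
  have h2 : ENNReal.ofReal (2 * π * ‖f z‖) ≤
      ∫⁻ θ in Ioo (-π) π, ENNReal.ofReal ‖f (circleMap z s θ)‖ := by
    rw [← ofReal_integral_eq_lintegral_ofReal hInt
      (ae_of_all _ fun θ => norm_nonneg _)]
    exact ENNReal.ofReal_le_ofReal h1
  -- Hölder
  have hH := hsHolder (volume.restrict (Ioo (-π) π)) hp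
    (g := fun θ => ENNReal.ofReal ‖f (circleMap z s θ)‖)
    (ENNReal.measurable_ofReal.comp hcont.norm.measurable).aemeasurable
  rw [Measure.restrict_apply_univ, Real.volume_Ioo, show π - -π = 2*π by ring] at hH
  have hpow : ∀ θ : ℝ, (ENNReal.ofReal ‖f (circleMap z s θ)‖) ^ p
      = ENNReal.ofReal (‖f (circleMap z s θ)‖ ^ p) := fun θ =>
    ENNReal.ofReal_rpow_of_nonneg (norm_nonneg _) hp0.le
  simp only [hpow] at hH
  have h3 : (ENNReal.ofReal (2 * π * ‖f z‖)) ^ p ≤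
      ENNReal.ofReal (2*π) ^ (p-1) * ∫⁻ θ in Ioo (-π) π, ENNReal.ofReal (‖f (circleMap z s θ)‖ ^ p) :=
    le_trans (ENNReal.rpow_le_rpow h2 hp0.le) hH
  have hne0 : ENNReal.ofReal (2*π) ≠ 0 := (ENNReal.ofReal_pos.2 hπ).ne'
  have hlhs : (ENNReal.ofReal (2 * π * ‖f z‖)) ^ p
      = ENNReal.ofReal (2*π) ^ (p-1) * (ENNReal.ofReal (‖f z‖ ^ p) * ENNReal.ofReal (2*π)) := by
    rw [ENNReal.ofReal_rpow_of_nonneg (by positivity) hp0.le,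
      Real.mul_rpow hπ.le (norm_nonneg _), ENNReal.ofReal_mul (by positivity),
      ← ENNReal.ofReal_rpow_of_nonneg hπ.le hp0.le,
      show (p : ℝ) = (p-1) + 1 by ring, ENNReal.rpow_add _ _ hne0 ENNReal.ofReal_ne_top,
      ENNReal.rpow_one, show (p-1+1-1 : ℝ) = p - 1 by ring]
    ring
  rw [hlhs] at h3
  exact (ENNReal.mul_le_mul_iff_right
    (ENNReal.rpow_pos (ENNReal.ofReal_pos.2 hπ) ENNReal.ofReal_ne_top).ne'
    (ENNReal.rpow_ne_top_of_nonneg (by linarith) ENNReal.ofReal_ne_top)).1 h3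

lemma hsPtBoundE {p α : ℝ} (hp : 1 ≤ p) {f : ℂ → ℂ} (hf : DifferentiableOn ℂ f UHP)
    {z : ℂ} (hz : z ∈ UHP) :
    ENNReal.ofReal (‖f z‖ ^ p) *
      (ENNReal.ofReal (2 * π) *
        ENNReal.ofReal (min ((z.im/2) ^ (α-1)) ((3*z.im/2) ^ (α-1))) *
        ENNReal.ofReal ((z.im/2)^2 / 2)) ≤
      ∫⁻ x : ℝ, ∫⁻ y in Ioi (0:ℝ),
        ENNReal.ofReal (‖f (x + y * Complex.I)‖ ^ p * y ^ (α - 1)) := by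
  have hp0 : (0:ℝ) < p := lt_of_lt_of_le one_pos hp
  have hy : 0 < z.im := hz
  set r : ℝ := z.im / 2 with hrdef
  have hr : 0 < r := by positivity
  set c₀ : ℝ := min ((z.im/2) ^ (α-1)) ((3*z.im/2) ^ (α-1)) with hc₀def
  have hc₀ : 0 < c₀ := lt_min (Real.rpow_pos_of_pos (by linarith) _)
    (Real.rpow_pos_of_pos (by linarith) _)
  have hc₀le : ∀ b : ℝ, z.im/2 ≤ b → b ≤ 3*z.im/2 → c₀ ≤ b ^ (α-1) := by
    intro b hb1 hb2
    rcases le_total (α-1) 0 with h | h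
    · exact (min_le_right _ _).trans (Real.rpow_le_rpow_of_nonpos (by linarith) hb2 h)
    · exact (min_le_left _ _).trans (Real.rpow_le_rpow (by linarith) hb1 h)
  set U : Set (ℝ × ℝ) := {q : ℝ × ℝ | 0 < q.2} with hUdef
  have hU : IsOpen U := isOpen_lt continuous_const continuous_snd
  set G : ℝ × ℝ → ℝ≥0∞ := U.indicator
    (fun q => ENNReal.ofReal (‖f (q.1 + q.2 * Complex.I)‖ ^ p * q.2 ^ (α - 1))) with hGdef
  have hcontG : ContinuousOn
      (fun q : ℝ × ℝ => ENNReal.ofReal (‖f (q.1 + q.2 * Complex.I)‖ ^ p * q.2 ^ (α - 1))) U := by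
    have hmap : ∀ q : ℝ × ℝ, q ∈ U → ((q.1 : ℂ) + (q.2 : ℂ) * Complex.I) ∈ UHP := by
      intro q hq
      show (0:ℝ) < ((q.1 : ℂ) + (q.2 : ℂ) * Complex.I).im
      simp; exact hq
    have hc1 : ContinuousOn (fun q : ℝ × ℝ => ((q.1 : ℂ) + (q.2 : ℂ) * Complex.I)) U :=
      Continuous.continuousOn (by continuity)
    refine ENNReal.continuous_ofReal.comp_continuousOn (ContinuousOn.mul ?_ ?_)
    · refine ContinuousOn.rpow_const ?_ (fun q _ => Or.inr hp0.le)
      exact ((hf.continuousOn.comp hc1 hmap)).norm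
    · exact ContinuousOn.rpow_const continuous_snd.continuousOn
        (fun q hq => Or.inl (ne_of_gt hq))
  have hGm : Measurable G := hsIndicatorMeasurable hU hcontG
  set v : ℝ × ℝ := (z.re, z.im) with hvdef
  have hcirc : ∀ s θ : ℝ, 0 < s → s < r →
      ENNReal.ofReal c₀ * ENNReal.ofReal (‖f (circleMap z s θ)‖ ^ p)
        ≤ G (v + polarCoord.symm (s, θ)) := by
    intro s θ hs hsr
    have hsin : |Real.sin θ| ≤ 1 := abs_sin_le_one θ
    have hsin1 : -1 ≤ Real.sin θ := by cases abs_le.1 hsin; assumption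
    have hsin2 : Real.sin θ ≤ 1 := by cases abs_le.1 hsin; assumption
    have hq : v + polarCoord.symm (s, θ) = (z.re + s * Real.cos θ, z.im + s * Real.sin θ) := by
      show (z.re + s * Real.cos θ, z.im + s * Real.sin θ) = _
      rfl
    rw [hq]
    have hq2a : z.im/2 ≤ z.im + s * Real.sin θ := by nlinarith
    have hq2b : z.im + s * Real.sin θ ≤ 3 * z.im/2 := by nlinarith
    have hmem : ((z.re + s * Real.cos θ, z.im + s * Real.sin θ) : ℝ × ℝ) ∈ U := by
      show (0:ℝ) < z.im + s * Real.sin θ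
      linarith
    rw [hGdef, Set.indicator_of_mem hmem]
    have hptq : (((z.re + s * Real.cos θ : ℝ)) : ℂ) + ((z.im + s * Real.sin θ : ℝ) : ℂ) * Complex.I
        = circleMap z s θ := by
      apply Complex.ext <;>
        simp [circleMap, Complex.exp_mul_I, Complex.cos_ofReal_re, Complex.sin_ofReal_re]
    simp only
    rw [hptq, ← ENNReal.ofReal_mul hc₀.le]
    apply ENNReal.ofReal_le_ofReal
    rw [mul_comm]
    exact mul_le_mul_of_nonneg_left (hc₀le _ hq2a hq2b) (by positivity)
  have hslice : ∀ s : ℝ, s ∈ Ioo (0:ℝ) r →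
      ENNReal.ofReal (‖f z‖ ^ p) * ENNReal.ofReal (2*π) * ENNReal.ofReal c₀
        ≤ ∫⁻ θ in Ioo (-π) π, G (v + polarCoord.symm (s, θ)) := by
    intro s hs
    have h1 := hsCircleEst hp hf hs.1 (lt_trans hs.2 (by rw [hrdef]; linarith))
    calc ENNReal.ofReal (‖f z‖ ^ p) * ENNReal.ofReal (2*π) * ENNReal.ofReal c₀
        = ENNReal.ofReal c₀ * (ENNReal.ofReal (‖f z‖ ^ p) * ENNReal.ofReal (2*π)) := by ring
      _ ≤ ENNReal.ofReal c₀ * ∫⁻ θ in Ioo (-π) π, ENNReal.ofReal (‖f (circleMap z s θ)‖ ^ p) :=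
          mul_le_mul_right h1 _
      _ = ∫⁻ θ in Ioo (-π) π, ENNReal.ofReal c₀ * ENNReal.ofReal (‖f (circleMap z s θ)‖ ^ p) :=
          (lintegral_const_mul' _ _ ENNReal.ofReal_ne_top).symm
      _ ≤ ∫⁻ θ in Ioo (-π) π, G (v + polarCoord.symm (s, θ)) :=
          lintegral_mono fun θ => hcirc s θ hs.1 hs.2
  -- integrate in s
  have hs2 : (ENNReal.ofReal (‖f z‖ ^ p) * ENNReal.ofReal (2*π) * ENNReal.ofReal c₀) *
        ∫⁻ s in Ioo (0:ℝ) r, ENNReal.ofReal s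
      ≤ ∫⁻ s in Ioo (0:ℝ) r, ENNReal.ofReal s *
          ∫⁻ θ in Ioo (-π) π, G (v + polarCoord.symm (s, θ)) := by
    rw [← lintegral_const_mul' _ _ (by
      exact ENNReal.mul_ne_top (ENNReal.mul_ne_top ENNReal.ofReal_ne_top ENNReal.ofReal_ne_top)
        ENNReal.ofReal_ne_top)]
    apply lintegral_mono_ae
    filter_upwards [ae_restrict_mem measurableSet_Ioo] with s hs
    rw [mul_comm (ENNReal.ofReal s)]
    exact mul_le_mul_left (hslice s hs) _
  have harea : ∫⁻ s in Ioo (0:ℝ) r, ENNReal.ofReal s = ENNReal.ofReal (r^2/2) := by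
    rw [← ofReal_integral_eq_lintegral_ofReal
      (f := fun s : ℝ => s)
      ((continuous_id'.integrableOn_Icc).mono_set Ioo_subset_Icc_self)
      (by filter_upwards [ae_restrict_mem measurableSet_Ioo] with s hs using hs.1.le)]
    congr 1
    rw [← integral_Ioc_eq_integral_Ioo, ← intervalIntegral.integral_of_le hr.le]
    simpa using integral_id
  -- product
  have hsymm_cont : Continuous (fun q : ℝ × ℝ => polarCoord.symm q) :=
    continuous_iff_continuousAt.2 fun q => (hasFDerivAt_polarCoord_symm q).continuousAt
  have hFm : Measurable (fun q : ℝ × ℝ => ENNReal.ofReal q.1 * G (v + polarCoord.symm q)) :=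
    (ENNReal.measurable_ofReal.comp measurable_fst).mul
      (hGm.comp ((continuous_const.add hsymm_cont).measurable))
  have hprod : (∫⁻ s in Ioo (0:ℝ) r, ENNReal.ofReal s *
        ∫⁻ θ in Ioo (-π) π, G (v + polarCoord.symm (s, θ)))
      = ∫⁻ q in (Ioo (0:ℝ) r ×ˢ Ioo (-π) π),
          ENNReal.ofReal q.1 * G (v + polarCoord.symm q) := by
    calc (∫⁻ s in Ioo (0:ℝ) r, ENNReal.ofReal s *
          ∫⁻ θ in Ioo (-π) π, G (v + polarCoord.symm (s, θ)))
        = ∫⁻ s in Ioo (0:ℝ) r, ∫⁻ θ in Ioo (-π) π,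
            ENNReal.ofReal s * G (v + polarCoord.symm (s, θ)) :=
          lintegral_congr fun s => (lintegral_const_mul' _ _ ENNReal.ofReal_ne_top).symm
      _ = ∫⁻ q : ℝ × ℝ in (Ioo (0:ℝ) r ×ˢ Ioo (-π) π),
            ENNReal.ofReal q.1 * G (v + polarCoord.symm q) := by
          rw [Measure.volume_eq_prod, ← Measure.prod_restrict, lintegral_prod _ hFm.aemeasurable]
  have hS' : (Ioo (0:ℝ) r ×ˢ Ioo (-π) π) ⊆ polarCoord.target := by
    rw [polarCoord_target]
    exact prod_mono Ioo_subset_Ioi_self subset_rfl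
  have hpol := hsPolar (measurableSet_Ioo.prod measurableSet_Ioo) hS'
    (fun q => G (v + q))
  have htrans : ∫⁻ q : ℝ × ℝ, G (v + q) = ∫⁻ q : ℝ × ℝ, G q :=
    lintegral_add_left_eq_self G v
  have hTon : ∫⁻ q : ℝ × ℝ, G q = ∫⁻ x : ℝ, ∫⁻ y in Ioi (0:ℝ),
      ENNReal.ofReal (‖f (x + y * Complex.I)‖ ^ p * y ^ (α - 1)) := by
    rw [Measure.volume_eq_prod, lintegral_prod _ hGm.aemeasurable]
    congr 1
    funext x
    have e : (fun b : ℝ => G (x, b)) = (Ioi (0:ℝ)).indicator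
        (fun b => ENNReal.ofReal (‖f (x + b * Complex.I)‖ ^ p * b ^ (α - 1))) := by
      funext b
      by_cases hb : (0:ℝ) < b
      · rw [hGdef, Set.indicator_of_mem (by exact hb : ((x,b) : ℝ × ℝ) ∈ U),
          Set.indicator_of_mem (mem_Ioi.2 hb)]
      · rw [hGdef, Set.indicator_of_notMem (by exact hb : ¬ ((x,b) : ℝ × ℝ) ∈ U),
          Set.indicator_of_notMem (by simpa using hb)]
    rw [e, lintegral_indicator measurableSet_Ioi]
  calc ENNReal.ofReal (‖f z‖ ^ p) *
      (ENNReal.ofReal (2 * π) * ENNReal.ofReal c₀ * ENNReal.ofReal (r^2 / 2))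
      = (ENNReal.ofReal (‖f z‖ ^ p) * ENNReal.ofReal (2*π) * ENNReal.ofReal c₀) *
          ENNReal.ofReal (r^2/2) := by ring
    _ = (ENNReal.ofReal (‖f z‖ ^ p) * ENNReal.ofReal (2*π) * ENNReal.ofReal c₀) *
          ∫⁻ s in Ioo (0:ℝ) r, ENNReal.ofReal s := by rw [harea]
    _ ≤ ∫⁻ s in Ioo (0:ℝ) r, ENNReal.ofReal s *
          ∫⁻ θ in Ioo (-π) π, G (v + polarCoord.symm (s, θ)) := hs2
    _ = ∫⁻ q in (Ioo (0:ℝ) r ×ˢ Ioo (-π) π),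
          ENNReal.ofReal q.1 * G (v + polarCoord.symm q) := hprod
    _ ≤ ∫⁻ q : ℝ × ℝ, G (v + q) := hpol
    _ = ∫⁻ q : ℝ × ℝ, G q := htrans
    _ = _ := hTon

lemma hsPtBound {p α : ℝ} (hp : 1 ≤ p) {f : ℂ → ℂ}
    (hf : DifferentiableOn ℂ f UHP) (hfN : bergN p α f < ⊤) :
    ∃ C : ℝ, 0 ≤ C ∧ ∀ z ∈ UHP, ‖f z‖ ≤ C * z.im ^ (-((1+α)/p)) := by
  have hp0 : (0:ℝ) < p := lt_of_lt_of_le one_pos hp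
  set K : ℝ≥0∞ := ∫⁻ x : ℝ, ∫⁻ y in Ioi (0:ℝ),
    ENNReal.ofReal (‖f (x + y * Complex.I)‖ ^ p * y ^ (α - 1)) with hKdef
  have hK : K ≠ ⊤ := by
    intro htop
    rw [bergN, ← hKdef, htop, ENNReal.top_rpow_of_pos (by positivity)] at hfN
    exact (lt_irrefl _ hfN)
  set m : ℝ := min ((1/2:ℝ) ^ (α-1)) ((3/2:ℝ) ^ (α-1)) with hmdef
  have hm : 0 < m := lt_min (Real.rpow_pos_of_pos (by norm_num) _)
    (Real.rpow_pos_of_pos (by norm_num) _)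
  set c₂ : ℝ := 2 * π * m / 8 with hc₂def
  have hc₂ : 0 < c₂ := by have := Real.pi_pos; positivity
  refine ⟨(K.toReal / c₂) ^ (1/p), Real.rpow_nonneg (by positivity) _, ?_⟩
  intro z hz
  have hy : 0 < z.im := hz
  have hDy : 2 * π * min ((z.im/2) ^ (α-1)) ((3*z.im/2) ^ (α-1)) * ((z.im/2)^2 / 2)
      = c₂ * z.im ^ (α+1) := by
    have e1 : (z.im/2) ^ (α-1) = (1/2:ℝ) ^ (α-1) * z.im ^ (α-1) := by
      rw [show z.im/2 = (1/2) * z.im by ring, Real.mul_rpow (by norm_num) hy.le]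
    have e2 : (3*z.im/2) ^ (α-1) = (3/2:ℝ) ^ (α-1) * z.im ^ (α-1) := by
      rw [show 3*z.im/2 = (3/2) * z.im by ring, Real.mul_rpow (by norm_num) hy.le]
    have e3 : min ((z.im/2) ^ (α-1)) ((3*z.im/2) ^ (α-1)) = m * z.im ^ (α-1) := by
      rw [e1, e2, ← min_mul_of_nonneg _ _ (Real.rpow_nonneg hy.le _)]
    have e4 : z.im ^ (α-1) * z.im ^ (2:ℝ) = z.im ^ (α+1) := by
      rw [← Real.rpow_add hy, show α - 1 + 2 = α + 1 by ring]
    have e5 : (z.im/2)^2 / 2 = z.im ^ (2:ℝ) / 8 := by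
      rw [Real.rpow_two]; ring
    rw [e3, e5, hc₂def, ← e4]
    ring
  have hEst := hsPtBoundE (α := α) hp hf hz
  have hcomb : ENNReal.ofReal (2 * π) *
        ENNReal.ofReal (min ((z.im/2) ^ (α-1)) ((3*z.im/2) ^ (α-1))) *
        ENNReal.ofReal ((z.im/2)^2 / 2) = ENNReal.ofReal (c₂ * z.im ^ (α+1)) := by
    rw [← ENNReal.ofReal_mul (by positivity), ← ENNReal.ofReal_mul (by positivity), hDy]
  rw [hcomb, ← hKdef] at hEst
  have hD0 : (0:ℝ) < c₂ * z.im ^ (α+1) := by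
    have := Real.rpow_pos_of_pos hy (α+1); positivity
  have hDne : ENNReal.ofReal (c₂ * z.im ^ (α+1)) ≠ 0 := (ENNReal.ofReal_pos.2 hD0).ne'
  have hle : ENNReal.ofReal (‖f z‖ ^ p) ≤ K / ENNReal.ofReal (c₂ * z.im ^ (α+1)) :=
    (ENNReal.le_div_iff_mul_le (Or.inl hDne) (Or.inl ENNReal.ofReal_ne_top)).2 hEst
  have hreal : ‖f z‖ ^ p ≤ K.toReal / (c₂ * z.im ^ (α+1)) := by
    have h1 := (ENNReal.ofReal_le_iff_le_toReal
      (ENNReal.div_lt_top hK hDne).ne).1 hle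
    rwa [ENNReal.toReal_div, ENNReal.toReal_ofReal hD0.le] at h1
  have hrw : K.toReal / (c₂ * z.im ^ (α+1)) = (K.toReal / c₂) * z.im ^ (-(α+1)) := by
    rw [Real.rpow_neg hy.le, div_mul_eq_div_div, div_eq_mul_inv]
  rw [hrw] at hreal
  have hnorm : ‖f z‖ = (‖f z‖ ^ p) ^ (1/p) := by
    rw [← Real.rpow_mul (norm_nonneg _), mul_one_div_cancel hp0.ne', Real.rpow_one]
  rw [hnorm]
  calc (‖f z‖ ^ p) ^ (1/p) ≤ ((K.toReal / c₂) * z.im ^ (-(α+1))) ^ (1/p) :=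
        Real.rpow_le_rpow (Real.rpow_nonneg (norm_nonneg _) _) hreal (by positivity)
    _ = (K.toReal / c₂) ^ (1/p) * z.im ^ (-((1+α)/p)) := by
        rw [Real.mul_rpow (by positivity) (Real.rpow_nonneg hy.le _),
          ← Real.rpow_mul hy.le, show -(α+1) * (1/p) = -((1+α)/p) by ring]

lemma hsDerivBound {p α : ℝ} (hp : 1 ≤ p) (hα : 0 < α) {f : ℂ → ℂ}
    (hf : DifferentiableOn ℂ f UHP) {C : ℝ} (hC : 0 ≤ C)
    (hb : ∀ z ∈ UHP, ‖f z‖ ≤ C * z.im ^ (-((1+α)/p))) :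
    ∀ z ∈ UHP, ‖deriv f z‖ ≤
      (C * 2 ^ ((1+α)/p + 1)) * z.im ^ (-((1+α)/p) - 1) := by
  intro z hz
  have hp0 : (0:ℝ) < p := lt_of_lt_of_le one_pos hp
  have hy : 0 < z.im := hz
  set A : ℝ := (1+α)/p with hA
  have hA0 : 0 < A := div_pos (by linarith) hp0
  set R : ℝ := z.im/2 with hR
  have hR0 : 0 < R := by rw [hR]; linarith
  have hdc : DiffContOnCl ℂ f (Metric.ball z R) := by
    apply DifferentiableOn.diffContOnCl
    rw [closure_ball z hR0.ne']
    exact hf.mono (hsClosedBallSubset (by rw [hR]; linarith))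
  have hsph : ∀ w ∈ Metric.sphere z R, ‖f w‖ ≤ C * R ^ (-A) := by
    intro w hw
    rw [Metric.mem_sphere, Complex.dist_eq] at hw
    have h1 : |(w-z).im| ≤ ‖w-z‖ := Complex.abs_im_le_norm _
    rw [hw, Complex.sub_im] at h1
    have h2 : -(R) ≤ w.im - z.im := (abs_le.1 h1).1
    have him : R ≤ w.im := by rw [hR] at h2 ⊢; linarith
    have hw' : w ∈ UHP := by show 0 < w.im; linarith
    refine (hb w hw').trans ?_
    exact mul_le_mul_of_nonneg_left
      (Real.rpow_le_rpow_of_nonpos hR0 him (by linarith)) hC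
  have hmain := Complex.norm_deriv_le_of_forall_mem_sphere_norm_le hR0 hdc hsph
  refine hmain.trans ?_
  have e1 : C * R ^ (-A) / R = C * R ^ (-A - 1) := by
    rw [div_eq_mul_inv, mul_assoc, ← Real.rpow_neg_one R, ← Real.rpow_add hR0,
      show -A + -1 = -A - 1 by ring]
  have e2 : R ^ (-A - 1) = z.im ^ (-A - 1) * (2:ℝ) ^ (A + 1) := by
    rw [hR, show z.im / 2 = z.im * 2⁻¹ by ring, Real.mul_rpow hy.le (by norm_num),
      Real.inv_rpow (by norm_num), ← Real.rpow_neg (by norm_num),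
      show -(-A - 1) = A + 1 by ring]
  rw [e1, e2]
  ring_nf
  exact le_of_eq (by ring)

lemma hsKernInt {p α : ℝ} {φ : ℝ → ℝ} (hφ : Measurable φ) (hker : kern p α φ < ⊤)
    (c : ℝ) (hc : 0 ≤ c) :
    IntegrableOn (fun t => c * (t ^ ((1+α)/p - 1) * |φ t|)) (Ioi (0:ℝ)) volume := by
  constructor
  · have hm : Measurable fun t : ℝ => t ^ ((1+α)/p - 1) := by fun_prop
    exact (measurable_const.mul (hm.mul hφ.abs)).aestronglyMeasurable
  · rw [hasFiniteIntegral_iff_ofReal]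
    · calc ∫⁻ t in Ioi (0:ℝ), ENNReal.ofReal (c * (t ^ ((1+α)/p - 1) * |φ t|))
          = ∫⁻ t in Ioi (0:ℝ), ENNReal.ofReal c * ENNReal.ofReal (t ^ ((1+α)/p - 1) * |φ t|) := by
            apply lintegral_congr fun t => ENNReal.ofReal_mul hc
        _ = ENNReal.ofReal c * kern p α φ := lintegral_const_mul' _ _ ENNReal.ofReal_ne_top
        _ < ⊤ := ENNReal.mul_lt_top ENNReal.ofReal_lt_top hker
    · filter_upwards [ae_restrict_mem measurableSet_Ioi] with t ht
      exact mul_nonneg hc (mul_nonneg (Real.rpow_nonneg (le_of_lt ht) _) (abs_nonneg _))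

theorem stmt2 (p α : ℝ) (hp : 1 ≤ p) (hα : 0 < α) (φ : ℝ → ℝ)
    (hφ : Measurable φ) (hker : kern p α φ < ⊤)
    (f : ℂ → ℂ) (hf : DifferentiableOn ℂ f UHP) (hfN : bergN p α f < ⊤) :
    ∀ z ∈ UHP, HasDerivAt (Hc φ f)
      (∫ t in Ioi (0:ℝ), (φ t / t ^ 2) • deriv f (z / (t : ℂ))) z := by
  intro z₀ hz₀
  have hp0 : (0:ℝ) < p := lt_of_lt_of_le one_pos hp
  set A : ℝ := (1+α)/p with hA
  have hA0 : 0 < A := div_pos (by linarith) hp0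
  have hy₀ : 0 < z₀.im := hz₀
  obtain ⟨C, hC0, hCb₀⟩ := hsPtBound hp hf hfN
  have hDb₀ := hsDerivBound hp hα hf hC0 hCb₀
  have hCb : ∀ z ∈ UHP, ‖f z‖ ≤ C * z.im ^ (-A) := by
    intro z hz; have := hCb₀ z hz; rwa [← hA] at this
  have hDb : ∀ z ∈ UHP, ‖deriv f z‖ ≤ (C * 2 ^ (A + 1)) * z.im ^ (-A - 1) := by
    intro z hz; have := hDb₀ z hz; rwa [← hA] at this
  have hdc : ContinuousOn (deriv f) UHP :=
    ((hf.analyticOnNhd isOpen_UHP).deriv).continuousOn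
  have hdivUHP : ∀ x : ℂ, x ∈ UHP → ∀ t : ℝ, t ∈ Ioi (0:ℝ) → x / (t:ℂ) ∈ UHP := by
    intro x hx t ht
    show 0 < (x / (t:ℂ)).im
    rw [Complex.div_ofReal_im]
    exact div_pos hx ht
  have hcontdiv : ∀ x : ℂ, ContinuousOn (fun t : ℝ => x / (t:ℂ)) (Ioi 0) := by
    intro x
    apply ContinuousOn.div continuousOn_const Complex.continuous_ofReal.continuousOn
    intro t ht
    exact_mod_cast (ne_of_gt (show (0:ℝ) < t from ht))
  have hmeasF : ∀ x : ℂ, x ∈ UHP →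
      AEStronglyMeasurable (fun t : ℝ => (φ t / t) • f (x / (t:ℂ)))
        (volume.restrict (Ioi 0)) := by
    intro x hx
    refine AEStronglyMeasurable.smul (hφ.div measurable_id).aestronglyMeasurable ?_
    exact (hf.continuousOn.comp (hcontdiv x)
      (fun t ht => hdivUHP x hx t ht)).aestronglyMeasurable measurableSet_Ioi
  set ε : ℝ := z₀.im / 2 with hε
  have hε0 : 0 < ε := by rw [hε]; linarith
  have hballim : ∀ x ∈ Metric.ball z₀ ε, z₀.im / 2 < x.im := by
    intro x hx
    rw [Metric.mem_ball, Complex.dist_eq] at hx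
    have h1 : |(x - z₀).im| ≤ ‖x - z₀‖ := Complex.abs_im_le_norm _
    rw [Complex.sub_im] at h1
    have h2 := (abs_lt.1 (lt_of_le_of_lt h1 hx)).1
    rw [hε] at h2
    linarith
  have hballUHP : ∀ x ∈ Metric.ball z₀ ε, x ∈ UHP := fun x hx =>
    (show 0 < x.im by have := hballim x hx; linarith)
  set C₂ : ℝ := C * 2 ^ (A + 1) with hC₂
  have hC₂0 : 0 ≤ C₂ := by positivity
  have key := hasDerivAt_integral_of_dominated_loc_of_deriv_le (𝕜 := ℂ)
    (μ := volume.restrict (Ioi 0)) (x₀ := z₀)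
    (F := fun x t => (φ t / t) • f (x / (t:ℂ)))
    (F' := fun x t => (φ t / t ^ 2) • deriv f (x / (t:ℂ)))
    (bound := fun t => (C₂ * (z₀.im/2) ^ (-A - 1)) * (t ^ (A - 1) * |φ t|))
    (Metric.ball_mem_nhds z₀ hε0) ?_ ?_ ?_ ?_ ?_ ?_
  · exact key.2
  · -- measurability of F x for x near z₀
    filter_upwards [isOpen_UHP.mem_nhds hz₀] with x hx using hmeasF x hx
  · -- integrability of F z₀
    refine Integrable.mono' (g := fun t => (C * z₀.im ^ (-A)) * (t ^ (A - 1) * |φ t|))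
      ?_ (hmeasF z₀ hz₀) ?_
    · have := hsKernInt hφ hker (C * z₀.im ^ (-A)) (by positivity)
      rw [hA]
      exact this
    · filter_upwards [ae_restrict_mem measurableSet_Ioi] with t ht
      have ht0 : (0:ℝ) < t := ht
      have hmem : z₀ / (t:ℂ) ∈ UHP := hdivUHP z₀ hz₀ t ht
      have e : ((z₀ / (t:ℂ)).im) ^ (-A) = z₀.im ^ (-A) * t ^ A := by
        rw [Complex.div_ofReal_im, div_eq_mul_inv,
          Real.mul_rpow hy₀.le (inv_nonneg.2 ht0.le), Real.inv_rpow ht0.le,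
          Real.rpow_neg ht0.le, inv_inv]
      calc ‖(φ t / t) • f (z₀ / (t:ℂ))‖
          = |φ t| / t * ‖f (z₀ / (t:ℂ))‖ := by
            rw [norm_smul, Real.norm_eq_abs, abs_div, abs_of_pos ht0]
        _ ≤ |φ t| / t * (C * ((z₀ / (t:ℂ)).im) ^ (-A)) := by
            refine mul_le_mul_of_nonneg_left (hCb _ hmem) (by positivity)
        _ = (C * z₀.im ^ (-A)) * (t ^ (A - 1) * |φ t|) := by
            rw [e, Real.rpow_sub ht0, Real.rpow_one]
            field_simp
  · -- measurability of F' z₀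
    refine AEStronglyMeasurable.smul
      ((hφ.div (measurable_id.pow_const 2)).aestronglyMeasurable) ?_
    exact ((hdc.comp (hcontdiv z₀)
      (fun t ht => hdivUHP z₀ hz₀ t ht))).aestronglyMeasurable measurableSet_Ioi
  · -- uniform bound on the ball
    filter_upwards [ae_restrict_mem measurableSet_Ioi] with t ht x hx
    have ht0 : (0:ℝ) < t := ht
    have hxim := hballim x hx
    have hmem : x / (t:ℂ) ∈ UHP := hdivUHP x (hballUHP x hx) t ht
    have him : (x / (t:ℂ)).im = x.im / t := Complex.div_ofReal_im x t
    have hbase : (0:ℝ) < (z₀.im/2) / t := by positivity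
    have hmono : ((x / (t:ℂ)).im) ^ (-A - 1) ≤ ((z₀.im/2) / t) ^ (-A - 1) := by
      rw [him]
      exact Real.rpow_le_rpow_of_nonpos hbase
        ((div_le_div_iff_of_pos_right ht0).2 hxim.le) (by linarith)
    have ht2 : (0:ℝ) < t ^ 2 := by positivity
    calc ‖(φ t / t ^ 2) • deriv f (x / (t:ℂ))‖
        = |φ t| / t ^ 2 * ‖deriv f (x / (t:ℂ))‖ := by
          rw [norm_smul, Real.norm_eq_abs, abs_div, abs_of_pos ht2]
      _ ≤ |φ t| / t ^ 2 * (C₂ * ((x / (t:ℂ)).im) ^ (-A - 1)) :=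
          mul_le_mul_of_nonneg_left (hDb _ hmem) (by positivity)
      _ ≤ |φ t| / t ^ 2 * (C₂ * ((z₀.im/2) / t) ^ (-A - 1)) :=
          mul_le_mul_of_nonneg_left (mul_le_mul_of_nonneg_left hmono hC₂0) (by positivity)
      _ = (C₂ * (z₀.im/2) ^ (-A - 1)) * (t ^ (A - 1) * |φ t|) := by
          have e : ((z₀.im/2) / t) ^ (-A - 1) = (z₀.im/2) ^ (-A - 1) * t ^ (A + 1) := by
            rw [div_eq_mul_inv, Real.mul_rpow (by positivity) (inv_nonneg.2 ht0.le),
              Real.inv_rpow ht0.le, show (-A - 1 : ℝ) = -(A+1) by ring,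
              Real.rpow_neg ht0.le, inv_inv]
          have e2 : t ^ (A - 1) * t ^ (2:ℕ) = t ^ (A + 1) := by
            rw [← Real.rpow_natCast t 2, ← Real.rpow_add ht0]
            congr 1
            push_cast
            ring
          rw [e, ← e2]
          have htm : t ^ (A-1) ≠ 0 := (Real.rpow_pos_of_pos ht0 _).ne'
          field_simp
  · -- bound integrable
    have := hsKernInt hφ hker (C₂ * (z₀.im/2) ^ (-A - 1)) (by positivity)
    rw [hA]
    exact this
  · -- differentiability in x
    filter_upwards [ae_restrict_mem measurableSet_Ioi] with t ht x hx
    have ht0 : (0:ℝ) < t := ht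
    have htC : (t:ℂ) ≠ 0 := by exact_mod_cast ht0.ne'
    have hmem : x / (t:ℂ) ∈ UHP := hdivUHP x (hballUHP x hx) t ht
    have h1 : HasDerivAt f (deriv f (x / (t:ℂ))) (x / (t:ℂ)) :=
      (hf.differentiableAt (isOpen_UHP.mem_nhds hmem)).hasDerivAt
    have h2 : HasDerivAt (fun w : ℂ => w / (t:ℂ)) (1 / (t:ℂ)) x := by
      simpa using (hasDerivAt_id x).div_const (t:ℂ)
    have h3 := h1.comp x h2
    have h4 := h3.const_smul (φ t / t)
    have heq : (φ t / t ^ 2) • deriv f (x / (t:ℂ))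
        = (φ t / t) • (deriv f (x / (t:ℂ)) * (1 / (t:ℂ))) := by
      rw [Complex.real_smul, Complex.real_smul]
      push_cast
      field_simp
    rw [heq]
    exact h4
end

section
/- Let 1 ≤ p < ∞, α > -1, and for ε ∈ (0, π/2) define Φ_ε(z) = (z + εi)^{-((1+α)/p + ε)} on ℂ₊. If (1+α)/p is not an even positive integer, then there exist ε(p,α) ∈ (0, π/2) and C(p,α) > 0 such that for all 0 < ε < ε(p,α), Im Φ_ε has constant sign on the sector {z ∈ ℂ₊ : π/2 - ε(p,α) < arg z < π/2}, and |Im Φ_ε(z)| ≥ C(p,α)|Φ_ε(z)| for all z in that sector. -/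
open MeasureTheory Complex Set Real Filter
open scoped ENNReal

/-- The test function `Φ_ε(z) = (z + εi)^{-((1+α)/p + ε)}` (principal branch). -/
noncomputable def PhiEps (p α ε : ℝ) (z : ℂ) : ℂ :=
  (z + (ε : ℂ) * Complex.I) ^ ((-((1 + α) / p + ε) : ℝ) : ℂ)

/-- The angular sector `{z : a < arg z < b}`. -/
def sector (a b : ℝ) : Set ℂ := {z : ℂ | a < Complex.arg z ∧ Complex.arg z < b}

lemma sin_lip (x y : ℝ) : |Real.sin x - Real.sin y| ≤ |x - y| := by
  rw [Real.sin_sub_sin, abs_mul, abs_mul, show |(2:ℝ)| = 2 from by norm_num]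
  have h1 : |Real.sin ((x - y) / 2)| ≤ |(x - y) / 2| := Real.abs_sin_le_abs
  have h2 : |Real.cos ((x + y) / 2)| ≤ 1 := Real.abs_cos_le_one _
  have h3 : |(x - y) / 2| = |x - y| / 2 := by rw [abs_div]; norm_num
  have h4 := mul_le_mul (h3 ▸ h1) h2 (abs_nonneg _) (by positivity)
  linarith

lemma cpow_real_im (w : ℂ) (hw : w ≠ 0) (r : ℝ) :
    (w ^ (r : ℂ)).im = ‖w ^ (r : ℂ)‖ * Real.sin (r * Complex.arg w) := by
  rw [Complex.cpow_def_of_ne_zero hw, Complex.exp_im, Complex.norm_exp]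
  congr 2
  simp [Complex.mul_im, Complex.log_im, Complex.log_re, mul_comm]

lemma cpow_real_abs_pos (w : ℂ) (hw : w ≠ 0) (r : ℝ) :
    0 < ‖w ^ (r : ℂ)‖ := by
  rw [Complex.cpow_def_of_ne_zero hw, Complex.norm_exp]
  exact Real.exp_pos _

set_option maxHeartbeats 1000000 in
theorem stmt6 (p α : ℝ) (hp : 1 ≤ p) (hα : -1 < α)
    (h : ¬ ∃ n : ℕ, 0 < n ∧ (1 + α) / p = 2 * (n : ℝ)) :
    ∃ ε₀ ∈ Ioo (0:ℝ) (π / 2), ∃ C > (0:ℝ), ∀ ε : ℝ, 0 < ε → ε < ε₀ →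
      ((∀ z ∈ sector (π / 2 - ε₀) (π / 2), 0 < (PhiEps p α ε z).im) ∨
        (∀ z ∈ sector (π / 2 - ε₀) (π / 2), (PhiEps p α ε z).im < 0)) ∧
      (∀ z ∈ sector (π / 2 - ε₀) (π / 2),
        C * ‖PhiEps p α ε z‖ ≤ |(PhiEps p α ε z).im|) := by
  have hp0 : 0 < p := lt_of_lt_of_le one_pos hp
  set β : ℝ := (1 + α) / p with hβdef
  have hβ : 0 < β := div_pos (by linarith) hp0
  set A : ℝ := Real.sin (β * (π / 2)) with hAdef
  have hπ : (0:ℝ) < π := Real.pi_pos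
  have hA : A ≠ 0 := by
    intro h0
    rw [hAdef, Real.sin_eq_zero_iff] at h0
    obtain ⟨n, hn⟩ := h0
    have hn2 : β = 2 * (n : ℝ) := by
      have hπ' : π ≠ 0 := ne_of_gt hπ
      field_simp at hn
      nlinarith [hπ]
    have hnpos : (0:ℝ) < (n : ℝ) := by nlinarith
    have hn0 : 0 < n := by exact_mod_cast hnpos
    refine h ⟨n.toNat, by omega, ?_⟩
    rw [hn2]
    congr 1
    exact_mod_cast (Int.toNat_of_nonneg hn0.le).symm
  set M : ℝ := |A| with hMdef
  have hM : 0 < M := abs_pos.mpr hA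
  set K : ℝ := π / 2 + β + 1 with hKdef
  have hK : 0 < K := by positivity
  set ε₀ : ℝ := min (π / 4) (min 1 (M / (2 * K))) with hε₀def
  have hε₀pos : 0 < ε₀ := lt_min (by linarith) (lt_min one_pos (by positivity))
  have hε₀lt : ε₀ < π / 2 := lt_of_le_of_lt (min_le_left _ _) (by linarith)
  have hε₀le1 : ε₀ ≤ 1 := le_trans (min_le_right _ _) (min_le_left _ _)
  have hε₀K : ε₀ * K ≤ M / 2 := by
    have h1 : ε₀ ≤ M / (2 * K) := le_trans (min_le_right _ _) (min_le_right _ _)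
    calc ε₀ * K ≤ (M / (2 * K)) * K := by nlinarith
      _ = M / 2 := by field_simp
  have hε₀4 : ε₀ ≤ π / 4 := min_le_left _ _
  have key : ∀ ε : ℝ, 0 < ε → ε < ε₀ → ∀ z ∈ sector (π / 2 - ε₀) (π / 2),
      ∃ S : ℝ, (PhiEps p α ε z).im = -(‖PhiEps p α ε z‖ * S) ∧
        0 < ‖PhiEps p α ε z‖ ∧ |S - A| ≤ M / 2 := by
    intro ε hε hεlt z hz
    obtain ⟨hz1, hz2⟩ := hz
    have hargpos : 0 < Complex.arg z := by
      have : (0:ℝ) < π / 2 - ε₀ := by linarith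
      linarith
    have hz0 : z ≠ 0 := by
      intro h0; rw [h0, Complex.arg_zero] at hargpos; linarith
    have hre : 0 < z.re := by
      rcases Complex.abs_arg_lt_pi_div_two_iff.mp (by
        rw [abs_lt]; constructor <;> linarith) with h1 | h1
      · exact h1
      · exact absurd h1 hz0
    set w : ℂ := z + (ε : ℂ) * Complex.I with hwdef
    have hwre : w.re = z.re := by simp [hwdef]
    have hwim : w.im = z.im + ε := by simp [hwdef]
    have hw0 : w ≠ 0 := by
      intro h0
      have : w.re = 0 := by rw [h0]; simp
      rw [hwre] at this; linarith
    set θ : ℝ := Complex.arg w with hθdef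
    have hθmem : θ ∈ Ioo (-(π/2)) (π/2) := by
      have := Complex.abs_arg_lt_pi_div_two_iff.mpr (Or.inl (hwre ▸ hre))
      rcases abs_lt.mp this with ⟨h1, h2⟩
      exact ⟨h1, h2⟩
    have hzmem : Complex.arg z ∈ Ioo (-(π/2)) (π/2) := ⟨by linarith, hz2⟩
    have htan : Real.tan (Complex.arg z) < Real.tan θ := by
      rw [Complex.tan_arg, hθdef, Complex.tan_arg, hwre, hwim]
      exact (div_lt_div_iff_of_pos_right hre).mpr (by linarith)
    have hargθ : Complex.arg z < θ :=
      (Real.strictMonoOn_tan.lt_iff_lt hzmem hθmem).mp htan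
    have hθlo : π / 2 - ε₀ < θ := lt_trans hz1 hargθ
    have hθhi : θ < π / 2 := hθmem.2
    have hθpos : 0 < θ := by linarith
    have hΦ : PhiEps p α ε z = w ^ (((-(β + ε)) : ℝ) : ℂ) := rfl
    refine ⟨Real.sin ((β + ε) * θ), ?_, ?_, ?_⟩
    · rw [hΦ, cpow_real_im w hw0]
      rw [show (-(β + ε)) * Complex.arg w = -((β + ε) * θ) by rw [hθdef]; ring,
        Real.sin_neg]
      ring
    · rw [hΦ]; exact cpow_real_abs_pos w hw0 _
    · have h1 : |Real.sin ((β + ε) * θ) - A| ≤ |(β + ε) * θ - β * (π / 2)| :=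
        sin_lip _ _
      have h2 : |(β + ε) * θ - β * (π / 2)| ≤ M / 2 := by
        rw [abs_le]
        constructor
        · nlinarith [mul_pos hε hθpos, mul_nonneg hβ.le (sub_nonneg.mpr hθhi.le),
            mul_le_mul_of_nonneg_left (show π/2 - θ ≤ ε₀ by linarith) hβ.le]
        · nlinarith [mul_nonneg hβ.le (sub_nonneg.mpr hθhi.le),
            mul_le_mul hεlt.le hθhi.le hθpos.le hε₀pos.le]
      linarith
  refine ⟨ε₀, ⟨hε₀pos, hε₀lt⟩, M / 2, by positivity, ?_⟩
  intro ε hε hεlt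
  rcases hA.lt_or_gt with hAneg | hApos
  · constructor
    · left
      intro z hz
      obtain ⟨S, heq, habs, hbd⟩ := key ε hε hεlt z hz
      have hS : S ≤ A / 2 := by
        rcases abs_le.mp hbd with ⟨h1, h2⟩
        have : M = -A := abs_of_neg hAneg
        linarith
      rw [heq]
      nlinarith
    · intro z hz
      obtain ⟨S, heq, habs, hbd⟩ := key ε hε hεlt z hz
      have hMA : M = -A := abs_of_neg hAneg
      have hS : S ≤ -(M / 2) := by
        rcases abs_le.mp hbd with ⟨h1, h2⟩
        linarith
      rw [heq, abs_of_pos (by nlinarith)]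
      nlinarith
  · constructor
    · right
      intro z hz
      obtain ⟨S, heq, habs, hbd⟩ := key ε hε hεlt z hz
      have hMA : M = A := abs_of_pos hApos
      have hS : M / 2 ≤ S := by
        rcases abs_le.mp hbd with ⟨h1, h2⟩
        linarith
      rw [heq]
      nlinarith
    · intro z hz
      obtain ⟨S, heq, habs, hbd⟩ := key ε hε hεlt z hz
      have hMA : M = A := abs_of_pos hApos
      have hS : M / 2 ≤ S := by
        rcases abs_le.mp hbd with ⟨h1, h2⟩
        linarith
      rw [heq, abs_of_neg (by nlinarith), neg_neg]
      nlinarith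
end

section
/- Let 1 ≤ p < ∞, α > -1, and for ε ∈ (0, π/2) define Φ_ε(z) = (z + εi)^{-((1+α)/p + ε)} on ℂ₊. If (1+α)/p is an even positive integer, then there exist ε(p,α) ∈ (0, π/2) and C(p,α) > 0 such that for all 0 < ε < ε(p,α), Re Φ_ε has constant sign on the sector {z ∈ ℂ₊ : π/2 - ε(p,α) < arg z < π/2}, and |Re Φ_ε(z)| ≥ C(p,α)|Φ_ε(z)| for all z in that sector. -/
open MeasureTheory Complex Set Real Filter
open scoped ENNReal

set_option maxHeartbeats 800000

lemma re_cpow_aux (w : ℂ) (hw : w ≠ 0) (c : ℝ) :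
    (w ^ ((c:ℝ) : ℂ)).re = ‖w ^ ((c:ℝ) : ℂ)‖ * Real.cos (c * w.arg) := by
  rw [Complex.cpow_def_of_ne_zero hw, Complex.norm_exp, Complex.exp_re]
  congr 2
  simp [Complex.mul_im, Complex.log_im, mul_comm]

lemma abs_cpow_pos_aux (w : ℂ) (hw : w ≠ 0) (c : ℝ) :
    0 < ‖w ^ ((c:ℝ) : ℂ)‖ := by
  rw [Complex.cpow_def_of_ne_zero hw, Complex.norm_exp]; exact Real.exp_pos _

lemma arg_eq_arctan_aux {x : ℂ} (hx : 0 < x.re) :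
    Complex.arg x = Real.arctan (x.im / x.re) := by
  have h := Complex.abs_arg_lt_pi_div_two_iff.2 (Or.inl hx)
  rw [abs_lt] at h
  rw [← Complex.tan_arg, Real.arctan_tan h.1 h.2]

theorem stmt7 (p α : ℝ) (hp : 1 ≤ p) (hα : -1 < α)
    (h : ∃ n : ℕ, 0 < n ∧ (1 + α) / p = 2 * (n : ℝ)) :
    ∃ ε₀ ∈ Ioo (0:ℝ) (π / 2), ∃ C > (0:ℝ), ∀ ε : ℝ, 0 < ε → ε < ε₀ →
      ((∀ z ∈ sector (π / 2 - ε₀) (π / 2), 0 < (PhiEps p α ε z).re) ∨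
        (∀ z ∈ sector (π / 2 - ε₀) (π / 2), (PhiEps p α ε z).re < 0)) ∧
      (∀ z ∈ sector (π / 2 - ε₀) (π / 2),
        C * ‖PhiEps p α ε z‖ ≤ |(PhiEps p α ε z).re|) := by
  obtain ⟨n, hn, h2n⟩ := h
  have hπ := Real.pi_pos
  have hN : (1:ℝ) ≤ (n:ℝ) := by exact_mod_cast hn
  have hden : (0:ℝ) < 12 * (n:ℝ) := by linarith
  set ε₀ : ℝ := π / (12 * (n:ℝ)) with hε₀def
  have hε₀pos : 0 < ε₀ := div_pos hπ hden
  have hε₀eq : 12 * (n:ℝ) * ε₀ = π := by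
    rw [hε₀def]; field_simp
  have hε₀le : ε₀ ≤ π / 12 := by
    rw [hε₀def, div_le_div_iff₀ hden (by norm_num)]
    nlinarith
  refine ⟨ε₀, ⟨hε₀pos, by linarith⟩, 1/2, by norm_num, ?_⟩
  intro ε hε hεε₀
  have key : ∀ z ∈ sector (π / 2 - ε₀) (π / 2),
      (1/2) * ‖PhiEps p α ε z‖ ≤ (-1:ℝ)^n * (PhiEps p α ε z).re ∧
      0 < ‖PhiEps p α ε z‖ := by
    intro z hz
    obtain ⟨hz1, hz2⟩ := hz
    have hargz_pos : 0 < Complex.arg z := by linarith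
    have hz0 : z ≠ 0 := by
      intro hzz; rw [hzz, Complex.arg_zero] at hargz_pos; exact lt_irrefl _ hargz_pos
    have habsz : 0 < ‖z‖ := norm_pos_iff.mpr hz0
    have hcos : 0 < Real.cos (Complex.arg z) :=
      Real.cos_pos_of_mem_Ioo ⟨by linarith, hz2⟩
    have hrez : 0 < z.re := by
      rw [← Complex.norm_mul_cos_arg z]; exact mul_pos habsz hcos
    set w : ℂ := z + (ε:ℂ) * Complex.I with hwdef
    have hwre : w.re = z.re := by simp [hwdef]
    have hwim : w.im = z.im + ε := by simp [hwdef]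
    have hwrepos : 0 < w.re := by rw [hwre]; exact hrez
    have hw0 : w ≠ 0 := by
      intro hww; rw [hww, Complex.zero_re] at hwrepos; exact lt_irrefl _ hwrepos
    have hargw_lt : Complex.arg w < π / 2 :=
      Complex.arg_lt_pi_div_two_iff.2 (Or.inl hwrepos)
    have hargw_gt : π / 2 - ε₀ < Complex.arg w := by
      calc π / 2 - ε₀ < Complex.arg z := hz1
        _ = Real.arctan (z.im / z.re) := arg_eq_arctan_aux hrez
        _ < Real.arctan (w.im / w.re) := by
            apply Real.arctan_strictMono
            rw [hwre, hwim]
            exact div_lt_div_of_pos_right (by linarith) hrez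
        _ = Complex.arg w := (arg_eq_arctan_aux hwrepos).symm
    set t : ℝ := Complex.arg w with htdef
    have ht0 : 0 < t := by linarith
    have hcexp : (-((1 + α) / p + ε)) = -(2*(n:ℝ) + ε) := by rw [h2n]
    set δ : ℝ := (n:ℝ) * π - (2*(n:ℝ) + ε) * t with hδdef
    have hn2pos : (0:ℝ) < 2*(n:ℝ) := by linarith
    have hδub : δ < π / 3 := by
      have h1 := mul_lt_mul_of_pos_left hargw_gt hn2pos
      have h2 : 0 < ε * t := mul_pos hε ht0
      rw [hδdef]
      nlinarith [hε₀eq]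
    have hδlb : -(π / 3) < δ := by
      have he1 := mul_le_mul_of_nonneg_left hargw_lt.le hn2pos.le
      have he2 : ε * t < ε₀ * (π/2) := mul_lt_mul'' hεε₀ hargw_lt hε.le ht0.le
      have he3 : ε₀ * (π/2) ≤ (π/12) * (π/2) :=
        mul_le_mul_of_nonneg_right hε₀le (by linarith)
      have he4 : (π/12) * (π/2) < π/3 := by nlinarith [Real.pi_lt_d2, hπ]
      rw [hδdef]
      nlinarith
    have habsδ : |δ| ≤ π / 3 := abs_le.2 ⟨by linarith, by linarith⟩
    have hcosδ : (1:ℝ)/2 ≤ Real.cos δ := by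
      have h1 : Real.cos (π/3) ≤ Real.cos |δ| :=
        Real.cos_le_cos_of_nonneg_of_le_pi (abs_nonneg _) (by linarith) habsδ
      rw [Real.cos_abs] at h1
      rw [← Real.cos_pi_div_three]
      exact h1
    have hre : (PhiEps p α ε z).re
        = ‖PhiEps p α ε z‖ * ((-1:ℝ)^n * Real.cos δ) := by
      have h1 : (PhiEps p α ε z).re
          = ‖PhiEps p α ε z‖ * Real.cos ((-((1 + α) / p + ε)) * t) := by
        unfold PhiEps
        exact re_cpow_aux w hw0 _
      rw [h1]
      congr 1
      rw [hcexp]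
      have h2 : (-(2*(n:ℝ) + ε)) * t = -((n:ℝ) * π - δ) := by
        rw [hδdef]; ring
      rw [h2, Real.cos_neg, Real.cos_nat_mul_pi_sub]
    have hA : 0 < ‖PhiEps p α ε z‖ := by
      unfold PhiEps
      exact abs_cpow_pos_aux w hw0 _
    refine ⟨?_, hA⟩
    rw [hre]
    have hsq : (-1:ℝ)^n * ((-1:ℝ)^n) = 1 := by
      rw [← pow_add]
      exact Even.neg_one_pow ⟨n, by ring⟩
    calc (1/2) * ‖PhiEps p α ε z‖
        ≤ ‖PhiEps p α ε z‖ * Real.cos δ := by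
          nlinarith [mul_le_mul_of_nonneg_left hcosδ hA.le]
      _ = (-1:ℝ)^n * (‖PhiEps p α ε z‖ * ((-1:ℝ)^n * Real.cos δ)) := by
          rw [show (-1:ℝ)^n * (‖PhiEps p α ε z‖ * ((-1:ℝ)^n * Real.cos δ))
            = ((-1:ℝ)^n * ((-1:ℝ)^n)) * (‖PhiEps p α ε z‖ * Real.cos δ) by ring,
            hsq, one_mul]
  constructor
  · rcases Nat.even_or_odd n with he | ho
    · left
      intro z hz
      obtain ⟨h1, h2⟩ := key z hz
      rw [he.neg_one_pow, one_mul] at h1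
      linarith
    · right
      intro z hz
      obtain ⟨h1, h2⟩ := key z hz
      rw [ho.neg_one_pow, neg_one_mul] at h1
      linarith
  · intro z hz
    obtain ⟨h1, h2⟩ := key z hz
    calc (1/2) * ‖PhiEps p α ε z‖ ≤ (-1:ℝ)^n * (PhiEps p α ε z).re := h1
      _ ≤ |(-1:ℝ)^n * (PhiEps p α ε z).re| := le_abs_self _
      _ = |(PhiEps p α ε z).re| := by
          simp [abs_mul]
end

section
/- Let 1 ≤ p ≤ ∞, α > -1, and let φ be measurable on (0,∞) with ∫₀^∞ t^{(1+α)/p - 1}|φ(t)| dt < ∞. Then the Hausdorff operator H_φ is bounded on the power weighted Hardy space H^p_{|·|^α}(ℂ₊) with ‖H_φ‖ ≤ ∫₀^∞ t^{(1+α)/p - 1}|φ(t)| dt. -/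
open MeasureTheory Complex Set Real Filter
open scoped ENNReal

/-- The power weighted Hardy space norm `‖f‖_{H^p_{|·|^α}(ℂ₊)}` for `1 ≤ p ≤ ∞`
(for `p = ∞` it is the sup norm on the half-plane; note `(⊤ : ℝ≥0∞).toReal = 0`). -/
noncomputable def hardyN (p : ℝ≥0∞) (α : ℝ) (f : ℂ → ℂ) : ℝ≥0∞ :=
  if p = ⊤ then ⨆ z : UHP, ENNReal.ofReal ‖f z‖
  else ⨆ y ∈ Ioi (0:ℝ),
    (∫⁻ x : ℝ, ENNReal.ofReal (‖f (x + y * Complex.I)‖ ^ p.toReal * |x| ^ α)) ^ (1 / p.toReal)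

/-- The kernel integral `∫₀^∞ t^{(1+α)/p - 1} |φ(t)| dt`; for `p = ∞` the exponent is `-1`
since `(⊤ : ℝ≥0∞).toReal = 0` and `(1+α)/0 = 0` in `ℝ`. -/
noncomputable def kernE (p : ℝ≥0∞) (α : ℝ) (φ : ℝ → ℝ) : ℝ≥0∞ :=
  ∫⁻ t in Ioi (0:ℝ), ENNReal.ofReal (t ^ ((1 + α) / p.toReal - 1) * |φ t|)

lemma enn_isup_min (a : ℝ≥0∞) : (⨆ m : ℕ, min a (m : ℝ≥0∞)) = a := by
  apply le_antisymm (iSup_le fun m => min_le_left _ _)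
  rcases eq_or_ne a ⊤ with rfl | ha
  · simp only [min_eq_right le_top, ← ENNReal.iSup_natCast, le_refl]
    exact le_of_eq (by simp [ENNReal.iSup_natCast, min_comm])
  · obtain ⟨m, hm⟩ := ENNReal.exists_nat_gt ha
    exact le_iSup_of_le m (le_min le_rfl hm.le)

/-- Minkowski's integral inequality for `ℝ≥0∞`-valued functions, measurable case. -/
lemma mink_meas {T X : Type*} [MeasurableSpace T] [MeasurableSpace X]
    (μ : Measure T) (ν : Measure X) [SFinite μ] [SigmaFinite ν]
    {g : T → X → ℝ≥0∞} (hg : Measurable fun p : T × X => g p.1 p.2)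
    {q : ℝ} (hq : 1 ≤ q) :
    (∫⁻ x, (∫⁻ t, g t x ∂μ) ^ q ∂ν) ^ (1 / q) ≤
      ∫⁻ t, (∫⁻ x, g t x ^ q ∂ν) ^ (1 / q) ∂μ := by
  have hq0 : (0:ℝ) < q := lt_of_lt_of_le zero_lt_one hq
  have hqne : q ≠ 0 := hq0.ne'
  have hinv : (0:ℝ) ≤ 1 / q := by positivity
  have hFm : Measurable (fun x => ∫⁻ t, g t x ∂μ) := hg.lintegral_prod_left'
  set F : X → ℝ≥0∞ := fun x => ∫⁻ t, g t x ∂μ with hFdef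
  set R : ℝ≥0∞ := ∫⁻ t, (∫⁻ x, g t x ^ q ∂ν) ^ (1 / q) ∂μ with hRdef
  rcases eq_or_lt_of_le hq with hq1 | hq1
  · subst hq1
    rw [hRdef]
    simp only [ENNReal.rpow_one, one_div_one]
    exact le_of_eq (lintegral_lintegral_swap hg.aemeasurable).symm
  -- now 1 < q
  have hconj : q.HolderConjugate (q / (q - 1)) := Real.HolderConjugate.conjExponent hq1
  set q' : ℝ := q / (q - 1) with hq'def
  have hq'0 : (0:ℝ) < q' := hconj.symm.pos
  have hinv' : (0:ℝ) ≤ 1 / q' := by positivity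
  set s : ℕ → Set X := spanningSets ν with hsdef
  set Fn : ℕ → X → ℝ≥0∞ := fun n x => min (F x ^ q) (n : ℝ≥0∞) ^ (1 / q) with hFndef
  have hFn_le : ∀ n x, Fn n x ≤ F x := by
    intro n x
    calc min (F x ^ q) (n:ℝ≥0∞) ^ (1/q) ≤ (F x ^ q) ^ (1/q) :=
          ENNReal.rpow_le_rpow (min_le_left _ _) hinv
      _ = F x := by
          rw [← ENNReal.rpow_mul, mul_one_div, div_self hqne, ENNReal.rpow_one]
  have hFn_ne_top : ∀ n x, Fn n x ≠ ⊤ := fun n x =>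
    ENNReal.rpow_ne_top_of_nonneg hinv
      (ne_top_of_le_ne_top (ENNReal.natCast_ne_top n) (min_le_right _ _))
  have hFn_pow : ∀ n x, Fn n x ^ q = min (F x ^ q) (n:ℝ≥0∞) := by
    intro n x
    rw [← ENNReal.rpow_mul, one_div_mul_cancel hqne, ENNReal.rpow_one]
  have hFnm : ∀ n, Measurable (Fn n) := fun n =>
    ((hFm.pow measurable_const).min measurable_const).pow measurable_const
  set I : ℕ → ℝ≥0∞ := fun n => ∫⁻ x in s n, Fn n x ^ q ∂ν with hIdef
  have hI_top : ∀ n, I n ≠ ⊤ := by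
    intro n
    have hb : I n ≤ (n:ℝ≥0∞) * ν (s n) := by
      calc I n ≤ ∫⁻ _x in s n, (n:ℝ≥0∞) ∂ν := by
            apply lintegral_mono
            intro x
            dsimp only
            rw [hFn_pow]
            exact min_le_right _ _
        _ = (n:ℝ≥0∞) * ν (s n) := by rw [setLIntegral_const]
    exact ne_top_of_le_ne_top
      (ENNReal.mul_ne_top (ENNReal.natCast_ne_top n) (measure_spanningSets_lt_top ν n).ne) hb
  have key : ∀ n, I n ≤ I n ^ (1/q') * R := by
    intro n
    have hq1' : (0:ℝ) ≤ q - 1 := by linarith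
    have hFnq1_ne_top : ∀ x, Fn n x ^ (q-1) ≠ ⊤ := fun x =>
      ENNReal.rpow_ne_top_of_nonneg hq1' (hFn_ne_top n x)
    calc I n ≤ ∫⁻ x in s n, Fn n x ^ (q-1) * F x ∂ν := by
          apply lintegral_mono
          intro x
          dsimp only
          have hiden : Fn n x ^ q = Fn n x ^ (q-1) * Fn n x := by
            have := ENNReal.rpow_add_of_nonneg (x := Fn n x) (q-1) 1 hq1' zero_le_one
            rw [sub_add_cancel] at this
            rw [this, ENNReal.rpow_one]
          rw [hiden]
          exact mul_le_mul_right (hFn_le n x) _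
      _ = ∫⁻ x in s n, ∫⁻ t, Fn n x ^ (q-1) * g t x ∂μ ∂ν := by
          apply lintegral_congr
          intro x
          rw [lintegral_const_mul' _ _ (hFnq1_ne_top x)]
      _ = ∫⁻ t, ∫⁻ x in s n, Fn n x ^ (q-1) * g t x ∂ν ∂μ := by
          apply lintegral_lintegral_swap
          exact ((((hFnm n).comp measurable_fst).pow measurable_const).mul
            (hg.comp measurable_swap)).aemeasurable
      _ ≤ ∫⁻ t, (∫⁻ x in s n, (Fn n x ^ (q-1)) ^ q' ∂ν) ^ (1/q') *
            (∫⁻ x in s n, g t x ^ q ∂ν) ^ (1/q) ∂μ := by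
          apply lintegral_mono
          intro t
          exact ENNReal.lintegral_mul_le_Lp_mul_Lq _ hconj.symm
            (((hFnm n).pow measurable_const).aemeasurable)
            ((hg.comp measurable_prodMk_left).aemeasurable)
      _ = ∫⁻ t, I n ^ (1/q') * (∫⁻ x in s n, g t x ^ q ∂ν) ^ (1/q) ∂μ := by
          apply lintegral_congr
          intro t
          congr 2
          apply lintegral_congr
          intro x
          rw [← ENNReal.rpow_mul, hconj.sub_one_mul_conj]
      _ ≤ I n ^ (1/q') * R := by
          rw [lintegral_const_mul' _ _ (ENNReal.rpow_ne_top_of_nonneg hinv' (hI_top n))]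
          apply mul_le_mul_right
          apply lintegral_mono
          intro t
          exact ENNReal.rpow_le_rpow
            (lintegral_mono' Measure.restrict_le_self le_rfl) hinv
  have keyq : ∀ n, I n ≤ R ^ q := by
    intro n
    rcases eq_or_ne (I n) 0 with h0 | h0
    · simp [h0]
    · have hpos : 0 < I n := pos_iff_ne_zero.mpr h0
      have hne : I n ^ (1/q') ≠ 0 := (ENNReal.rpow_pos hpos (hI_top n)).ne'
      have hnt : I n ^ (1/q') ≠ ⊤ := ENNReal.rpow_ne_top_of_nonneg hinv' (hI_top n)
      have h1 : I n ^ (1/q) ≤ R := by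
        have hsplit : I n ^ (1/q) = I n * (I n ^ (1/q'))⁻¹ := by
          have hexp : (1:ℝ)/q = 1 + -(1/q') := by
            have := hconj.inv_add_inv_eq_one
            rw [inv_eq_one_div, inv_eq_one_div] at this
            linarith
          rw [hexp, ENNReal.rpow_add _ _ h0 (hI_top n), ENNReal.rpow_one,
            ENNReal.rpow_neg]
        rw [hsplit]
        calc I n * (I n ^ (1/q'))⁻¹ ≤ (I n ^ (1/q') * R) * (I n ^ (1/q'))⁻¹ :=
              mul_le_mul_left (key n) _
          _ = R * (I n ^ (1/q') * (I n ^ (1/q'))⁻¹) := by ring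
          _ = R := by rw [ENNReal.mul_inv_cancel hne hnt, mul_one]
      calc I n = (I n ^ (1/q)) ^ q := by
            rw [← ENNReal.rpow_mul, one_div_mul_cancel hqne, ENNReal.rpow_one]
        _ ≤ R ^ q := ENNReal.rpow_le_rpow h1 hq0.le
  -- monotone convergence
  set G : ℕ → X → ℝ≥0∞ := fun n => (s n).indicator (fun x => min (F x ^ q) (n:ℝ≥0∞))
    with hGdef
  have hGm : ∀ n, Measurable (G n) :=
    fun n => (((hFm.pow measurable_const).min measurable_const)).indicator
      (measurableSet_spanningSets ν n)
  have hGmono : Monotone G := by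
    intro m n hmn x
    simp only [hGdef]
    by_cases hx : x ∈ s m
    · rw [indicator_of_mem hx, indicator_of_mem (monotone_spanningSets ν hmn hx)]
      exact min_le_min le_rfl (Nat.cast_le.mpr hmn)
    · simp [indicator_of_notMem hx]
  have hGsup : ∀ x, (⨆ n, G n x) = F x ^ q := by
    intro x
    obtain ⟨n₀, hn₀⟩ : ∃ n, x ∈ s n := by
      have : x ∈ ⋃ n, s n := by rw [hsdef, iUnion_spanningSets]; trivial
      exact mem_iUnion.mp this
    apply le_antisymm
    · exact iSup_le fun n => (indicator_le_self _ _ x).trans (min_le_left _ _)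
    · conv_lhs => rw [← enn_isup_min (F x ^ q)]
      apply iSup_le
      intro m
      refine le_iSup_of_le (max n₀ m) ?_
      rw [hGdef]
      simp only []
      rw [indicator_of_mem (monotone_spanningSets ν (le_max_left n₀ m) hn₀)]
      exact min_le_min le_rfl (Nat.cast_le.mpr (le_max_right n₀ m))
  have hL : ∫⁻ x, F x ^ q ∂ν ≤ R ^ q := by
    calc ∫⁻ x, F x ^ q ∂ν = ∫⁻ x, ⨆ n, G n x ∂ν := by
          apply lintegral_congr
          intro x
          rw [hGsup]
      _ = ⨆ n, ∫⁻ x, G n x ∂ν := lintegral_iSup hGm hGmono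
      _ = ⨆ n, I n := by
          apply iSup_congr
          intro n
          rw [hGdef]
          simp only []
          rw [lintegral_indicator (measurableSet_spanningSets ν n)]
          exact lintegral_congr fun x => (hFn_pow n x).symm
      _ ≤ R ^ q := iSup_le keyq
  calc (∫⁻ x, F x ^ q ∂ν) ^ (1/q) ≤ (R ^ q) ^ (1/q) := ENNReal.rpow_le_rpow hL hinv
    _ = R := by rw [← ENNReal.rpow_mul, mul_one_div, div_self hqne, ENNReal.rpow_one]

/-- Minkowski's integral inequality for `ℝ≥0∞`-valued functions, a.e.-measurable case. -/
lemma mink_ae {T X : Type*} [MeasurableSpace T] [MeasurableSpace X]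
    (μ : Measure T) (ν : Measure X) [SFinite μ] [SigmaFinite ν]
    {g : T → X → ℝ≥0∞} (hg : AEMeasurable (fun p : T × X => g p.1 p.2) (μ.prod ν))
    {q : ℝ} (hq : 1 ≤ q) :
    (∫⁻ x, (∫⁻ t, g t x ∂μ) ^ q ∂ν) ^ (1 / q) ≤
      ∫⁻ t, (∫⁻ x, g t x ^ q ∂ν) ^ (1 / q) ∂μ := by
  set G := hg.mk _ with hGdef
  have hGm : Measurable G := hg.measurable_mk
  have hswap : ∀ᵐ w ∂(ν.prod μ), g w.2 w.1 = G (w.2, w.1) :=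
    (Measure.measurePreserving_swap (μ := ν) (ν := μ)).quasiMeasurePreserving.tendsto_ae.eventually
      hg.ae_eq_mk
  have hL : ∀ᵐ x ∂ν, (∫⁻ t, g t x ∂μ) ^ q = (∫⁻ t, G (t, x) ∂μ) ^ q := by
    filter_upwards [Measure.ae_ae_of_ae_prod hswap] with x hx
    rw [lintegral_congr_ae hx]
  have hR : ∀ᵐ t ∂μ, (∫⁻ x, g t x ^ q ∂ν) ^ (1/q) = (∫⁻ x, G (t, x) ^ q ∂ν) ^ (1/q) := by
    filter_upwards [Measure.ae_ae_of_ae_prod hg.ae_eq_mk] with t ht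
    rw [lintegral_congr_ae (ht.mono fun x hx => by rw [hx])]
  calc (∫⁻ x, (∫⁻ t, g t x ∂μ) ^ q ∂ν) ^ (1 / q)
      = (∫⁻ x, (∫⁻ t, G (t, x) ∂μ) ^ q ∂ν) ^ (1 / q) := by rw [lintegral_congr_ae hL]
    _ ≤ ∫⁻ t, (∫⁻ x, G (t, x) ^ q ∂ν) ^ (1 / q) ∂μ :=
        mink_meas μ ν (g := fun t x => G (t, x)) hGm hq
    _ = ∫⁻ t, (∫⁻ x, g t x ^ q ∂ν) ^ (1 / q) ∂μ := (lintegral_congr_ae hR).symm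

/-- Substitution `x ↦ t x` in a lintegral over `ℝ` (no measurability needed). -/
lemma lintegral_scale_aux (F : ℝ → ℝ≥0∞) {t : ℝ} (ht : 0 < t) :
    ∫⁻ x, F x = ENNReal.ofReal t * ∫⁻ x, F (t * x) := by
  have hne : t ≠ 0 := ht.ne'
  have e : ℝ ≃ᵐ ℝ := (Homeomorph.mulLeft₀ t hne).toMeasurableEquiv
  have h1 : ∫⁻ x, F (t * x) ∂(volume : Measure ℝ)
      = ∫⁻ x, F x ∂(Measure.map (t * ·) (volume : Measure ℝ)) := by
    rw [show ((t * ·) : ℝ → ℝ) = ⇑((Homeomorph.mulLeft₀ t hne).toMeasurableEquiv) from rfl,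
      lintegral_map_equiv]
    rfl
  rw [h1, Real.map_volume_mul_left hne, lintegral_smul_measure, smul_eq_mul, ← mul_assoc,
    ← ENNReal.ofReal_mul ht.le, abs_inv, abs_of_pos ht, mul_inv_cancel₀ hne,
    ENNReal.ofReal_one, one_mul]

/-- Weighted scaling: `∫ |x|^α h(x/t) dx = t^(1+α) ∫ |x|^α h(x) dx` for `t > 0`. -/
lemma lintegral_weight_scale {α : ℝ} {t : ℝ} (ht : 0 < t) (h : ℝ → ℝ≥0∞) :
    ∫⁻ x : ℝ, ENNReal.ofReal (|x| ^ α) * h (x / t)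
      = ENNReal.ofReal (t ^ (1 + α)) * ∫⁻ x : ℝ, ENNReal.ofReal (|x| ^ α) * h x := by
  rw [lintegral_scale_aux (fun x => ENNReal.ofReal (|x| ^ α) * h (x / t)) ht]
  have hpt : ∀ x : ℝ, ENNReal.ofReal (|t * x| ^ α) * h ((t * x) / t)
      = ENNReal.ofReal (t ^ α) * (ENNReal.ofReal (|x| ^ α) * h x) := by
    intro x
    rw [mul_div_cancel_left₀ _ ht.ne', abs_mul, abs_of_pos ht,
      Real.mul_rpow ht.le (abs_nonneg x), ENNReal.ofReal_mul (Real.rpow_nonneg ht.le α),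
      mul_assoc]
  calc ENNReal.ofReal t * ∫⁻ x, ENNReal.ofReal (|t * x| ^ α) * h ((t * x) / t)
      = ENNReal.ofReal t * ∫⁻ x, ENNReal.ofReal (t ^ α) * (ENNReal.ofReal (|x| ^ α) * h x) := by
        rw [lintegral_congr hpt]
    _ = ENNReal.ofReal t * (ENNReal.ofReal (t ^ α) * ∫⁻ x, ENNReal.ofReal (|x| ^ α) * h x) := by
        rw [lintegral_const_mul' _ _ ENNReal.ofReal_ne_top]
    _ = ENNReal.ofReal (t ^ (1 + α)) * ∫⁻ x : ℝ, ENNReal.ofReal (|x| ^ α) * h x := by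
        rw [← mul_assoc, ← ENNReal.ofReal_mul ht.le, Real.rpow_add ht, Real.rpow_one]

theorem stmt9 (p : ℝ≥0∞) (hp : 1 ≤ p) (α : ℝ) (hα : -1 < α) (φ : ℝ → ℝ)
    (hφ : Measurable φ) (hker : kernE p α φ < ⊤) :
    ∀ f : ℂ → ℂ, DifferentiableOn ℂ f UHP → hardyN p α f < ⊤ →
      hardyN p α (Hc φ f) ≤ kernE p α φ * hardyN p α f := by
  intro f hf hfN
  by_cases hptop : p = ⊤
  · subst hptop
    rw [hardyN, if_pos rfl] at hfN
    rw [hardyN, if_pos rfl]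
    set M : ℝ≥0∞ := ⨆ z : UHP, ENNReal.ofReal ‖f z‖ with hMdef
    have hMle : ∀ z : ℂ, z ∈ UHP → ENNReal.ofReal ‖f z‖ ≤ M := fun z hz =>
      le_iSup (fun w : UHP => ENNReal.ofReal ‖f w‖) ⟨z, hz⟩
    have hk : ∀ t : ℝ, t ∈ Ioi (0:ℝ) →
        ENNReal.ofReal |φ t / t| = ENNReal.ofReal (t ^ ((1 + α) / (⊤:ℝ≥0∞).toReal - 1) * |φ t|) := by
      intro t ht
      have ht0 : (0:ℝ) < t := ht
      rw [ENNReal.toReal_top, div_zero, zero_sub, Real.rpow_neg_one, abs_div, abs_of_pos ht0,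
        div_eq_inv_mul]
    refine iSup_le fun z => ?_
    obtain ⟨z, hz⟩ := z
    have hz' : (0:ℝ) < z.im := hz
    calc ENNReal.ofReal ‖Hc φ f z‖ = (‖Hc φ f z‖₊ : ℝ≥0∞) := ofReal_norm _
      _ ≤ ∫⁻ t in Ioi (0:ℝ), (‖(φ t / t) • f (z / (t:ℂ))‖₊ : ℝ≥0∞) :=
          enorm_integral_le_lintegral_enorm _
      _ ≤ ∫⁻ t in Ioi (0:ℝ),
            ENNReal.ofReal (t ^ ((1 + α) / (⊤:ℝ≥0∞).toReal - 1) * |φ t|) * M := by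
          apply lintegral_mono_ae
          filter_upwards [ae_restrict_mem measurableSet_Ioi] with t ht
          have ht0 : (0:ℝ) < t := ht
          have hzt : z / (t:ℂ) ∈ UHP := by
            simp only [UHP, mem_setOf_eq, Complex.div_ofReal_im]
            positivity
          rw [← enorm_eq_nnnorm, ← ofReal_norm, norm_smul, Real.norm_eq_abs,
            ENNReal.ofReal_mul (abs_nonneg _), hk t ht]
          exact mul_le_mul_right (hMle _ hzt) _
      _ = kernE ⊤ α φ * M := by
          rw [kernE, lintegral_mul_const' _ _ hfN.ne]
  · -- finite exponent case
    have hq1 : (1:ℝ) ≤ p.toReal := by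
      have := ENNReal.toReal_mono hptop hp
      simpa using this
    have hq0 : (0:ℝ) < p.toReal := lt_of_lt_of_le zero_lt_one hq1
    have hqne : p.toReal ≠ 0 := hq0.ne'
    have hinv : (0:ℝ) ≤ 1 / p.toReal := by positivity
    have hfc : ContinuousOn f UHP := hf.continuousOn
    set M : ℝ≥0∞ := hardyN p α f with hMdef
    have hM : M = ⨆ y ∈ Ioi (0:ℝ),
        (∫⁻ x : ℝ, ENNReal.ofReal (‖f (x + y * Complex.I)‖ ^ p.toReal * |x| ^ α))
          ^ (1 / p.toReal) := by
      rw [hMdef, hardyN, if_neg hptop]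
    rw [hardyN, if_neg hptop]
    refine iSup₂_le fun y hy => ?_
    have hy0 : (0:ℝ) < y := hy
    set w : ℝ → ℝ≥0∞ := fun x => ENNReal.ofReal (|x| ^ α) with hwdef
    have hwm : Measurable w :=
      ENNReal.measurable_ofReal.comp ((_root_.continuous_abs.measurable).pow measurable_const)
    set ν : Measure ℝ := volume.withDensity w with hνdef
    haveI hνsf : SigmaFinite ν := by
      rw [hνdef, hwdef]
      exact SigmaFinite.withDensity_ofReal _
    set μ₀ : Measure ℝ := volume.restrict (Ioi (0:ℝ)) with hμdef
    set g : ℝ → ℝ → ℝ≥0∞ := fun t x =>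
      ENNReal.ofReal |φ t / t| *
        ENNReal.ofReal ‖f (((x:ℂ) + (y:ℂ) * Complex.I) / (t:ℂ))‖ with hgdef
    -- measurability of g on the product
    have hprodeq : μ₀.prod ν = (volume.prod ν).restrict (Ioi (0:ℝ) ×ˢ (univ : Set ℝ)) := by
      rw [hμdef, ← Measure.prod_restrict, Measure.restrict_univ]
    have hgm : AEMeasurable (fun q : ℝ × ℝ => g q.1 q.2) (μ₀.prod ν) := by
      have hA : AEMeasurable (fun q : ℝ × ℝ => ENNReal.ofReal |φ q.1 / q.1|) (μ₀.prod ν) :=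
        (ENNReal.measurable_ofReal.comp
          (((hφ.div measurable_id).abs).comp measurable_fst)).aemeasurable
      have hBc : ContinuousOn
          (fun q : ℝ × ℝ =>
            ENNReal.ofReal ‖f (((q.2:ℂ) + (y:ℂ) * Complex.I) / (q.1:ℂ))‖)
          (Ioi (0:ℝ) ×ˢ (univ : Set ℝ)) := by
        have hinner : ContinuousOn
            (fun q : ℝ × ℝ => ((q.2:ℂ) + (y:ℂ) * Complex.I) / (q.1:ℂ))
            (Ioi (0:ℝ) ×ˢ (univ : Set ℝ)) := by
          apply ContinuousOn.div
          · fun_prop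
          · fun_prop
          · rintro ⟨t, x⟩ hq
            have : (0:ℝ) < t := hq.1
            exact_mod_cast ne_of_gt this
        have hmaps : MapsTo
            (fun q : ℝ × ℝ => ((q.2:ℂ) + (y:ℂ) * Complex.I) / (q.1:ℂ))
            (Ioi (0:ℝ) ×ˢ (univ : Set ℝ)) UHP := by
          rintro ⟨t, x⟩ hq
          have ht0 : (0:ℝ) < t := hq.1
          simp only [UHP, mem_setOf_eq, Complex.div_ofReal_im]
          simp only [Complex.add_im, Complex.ofReal_im, Complex.mul_im, Complex.ofReal_re,
            Complex.I_im, Complex.I_re, Complex.mul_re, mul_zero, mul_one, zero_add]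
          positivity
        exact ENNReal.continuous_ofReal.comp_continuousOn
          (continuous_norm.comp_continuousOn (hfc.comp hinner hmaps))
      have hB : AEMeasurable
          (fun q : ℝ × ℝ =>
            ENNReal.ofReal ‖f (((q.2:ℂ) + (y:ℂ) * Complex.I) / (q.1:ℂ))‖) (μ₀.prod ν) := by
        rw [hprodeq]
        exact hBc.aemeasurable (measurableSet_Ioi.prod MeasurableSet.univ)
      exact hA.mul hB
    -- pointwise bound on the Hausdorff operator
    have hkey : ∀ x : ℝ,
        ENNReal.ofReal ‖Hc φ f ((x:ℂ) + (y:ℂ) * Complex.I)‖ ≤ ∫⁻ t, g t x ∂μ₀ := by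
      intro x
      calc ENNReal.ofReal ‖Hc φ f ((x:ℂ) + (y:ℂ) * Complex.I)‖
          = (‖Hc φ f ((x:ℂ) + (y:ℂ) * Complex.I)‖₊ : ℝ≥0∞) := ofReal_norm _
        _ ≤ ∫⁻ t in Ioi (0:ℝ),
              (‖(φ t / t) • f ((((x:ℂ) + (y:ℂ) * Complex.I)) / (t:ℂ))‖₊ : ℝ≥0∞) :=
            enorm_integral_le_lintegral_enorm _
        _ = ∫⁻ t, g t x ∂μ₀ := by
            apply lintegral_congr
            intro t
            rw [hgdef]
            rw [← enorm_eq_nnnorm, ← ofReal_norm, norm_smul, Real.norm_eq_abs,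
              ENNReal.ofReal_mul (abs_nonneg _)]
    -- step 2 : weighted integral bound
    have step2 : (∫⁻ x : ℝ,
          ENNReal.ofReal (‖Hc φ f ((x:ℂ) + (y:ℂ) * Complex.I)‖ ^ p.toReal * |x| ^ α))
        ≤ ∫⁻ x, (∫⁻ t, g t x ∂μ₀) ^ p.toReal ∂ν := by
      rw [hνdef, lintegral_withDensity_eq_lintegral_mul_non_measurable _ hwm
        (ae_of_all _ fun x => ENNReal.ofReal_lt_top)]
      apply lintegral_mono
      intro x
      simp only [Pi.mul_apply]
      rw [ENNReal.ofReal_mul (by positivity), mul_comm]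
      refine mul_le_mul' le_rfl ?_
      rw [← ENNReal.ofReal_rpow_of_nonneg (norm_nonneg _) hq0.le]
      exact ENNReal.rpow_le_rpow (hkey x) hq0.le
    -- step 4 : bound for the inner norms
    have step4 : ∀ t ∈ Ioi (0:ℝ),
        (∫⁻ x, g t x ^ p.toReal ∂ν) ^ (1 / p.toReal)
          ≤ ENNReal.ofReal (t ^ ((1 + α) / p.toReal - 1) * |φ t|) * M := by
      intro t ht
      have ht0 : (0:ℝ) < t := ht
      set c : ℝ≥0∞ := ENNReal.ofReal |φ t / t| with hcdef
      set H : ℝ → ℝ≥0∞ := fun u =>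
        ENNReal.ofReal ‖f ((u:ℂ) + ((y/t : ℝ):ℂ) * Complex.I)‖ ^ p.toReal with hHdef
      have hgq : ∀ x : ℝ, g t x ^ p.toReal = c ^ p.toReal * H (x / t) := by
        intro x
        have harg : ((x:ℂ) + (y:ℂ) * Complex.I) / (t:ℂ)
            = ((x/t : ℝ):ℂ) + ((y/t : ℝ):ℂ) * Complex.I := by
          push_cast
          ring
        rw [hgdef]
        dsimp only
        rw [harg, ENNReal.mul_rpow_of_nonneg _ _ hq0.le]
      set A : ℝ≥0∞ := ∫⁻ x : ℝ,
        ENNReal.ofReal (‖f ((x:ℂ) + ((y/t : ℝ):ℂ) * Complex.I)‖ ^ p.toReal * |x| ^ α)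
        with hAdef
      have hwH : ∀ u : ℝ, w u * H u
          = ENNReal.ofReal (‖f ((u:ℂ) + ((y/t : ℝ):ℂ) * Complex.I)‖ ^ p.toReal * |u| ^ α) := by
        intro u
        rw [hwdef, hHdef]
        dsimp only
        rw [ENNReal.ofReal_mul (by positivity),
          ← ENNReal.ofReal_rpow_of_nonneg (norm_nonneg _) hq0.le, mul_comm]
      have hint : ∫⁻ x, g t x ^ p.toReal ∂ν
          = c ^ p.toReal * (ENNReal.ofReal (t ^ (1 + α)) * A) := by
        calc ∫⁻ x, g t x ^ p.toReal ∂ν = ∫⁻ x, c ^ p.toReal * H (x / t) ∂ν := by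
              exact lintegral_congr hgq
          _ = c ^ p.toReal * ∫⁻ x, H (x / t) ∂ν :=
              lintegral_const_mul' _ _
                (ENNReal.rpow_ne_top_of_nonneg hq0.le ENNReal.ofReal_ne_top)
          _ = c ^ p.toReal * (ENNReal.ofReal (t ^ (1 + α)) * A) := by
              congr 1
              rw [hνdef, lintegral_withDensity_eq_lintegral_mul_non_measurable _ hwm
                (ae_of_all _ fun x => ENNReal.ofReal_lt_top)]
              calc ∫⁻ x, (w * fun u => H (u / t)) x
                  = ∫⁻ x : ℝ, ENNReal.ofReal (|x| ^ α) * H (x / t) := by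
                    apply lintegral_congr
                    intro x
                    simp only [Pi.mul_apply, hwdef]
                _ = ENNReal.ofReal (t ^ (1 + α)) * ∫⁻ x : ℝ, ENNReal.ofReal (|x| ^ α) * H x :=
                    lintegral_weight_scale ht0 H
                _ = ENNReal.ofReal (t ^ (1 + α)) * A := by
                    congr 1
                    rw [hAdef]
                    apply lintegral_congr
                    intro u
                    have := hwH u
                    rw [hwdef] at this
                    exact this
      have hA_le : A ^ (1 / p.toReal) ≤ M := by
        rw [hM]
        exact le_biSup
          (fun y' : ℝ => (∫⁻ x : ℝ,
            ENNReal.ofReal (‖f ((x:ℂ) + (y':ℂ) * Complex.I)‖ ^ p.toReal * |x| ^ α))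
              ^ (1 / p.toReal))
          (show y / t ∈ Ioi (0:ℝ) from div_pos hy0 ht0)
      calc (∫⁻ x, g t x ^ p.toReal ∂ν) ^ (1 / p.toReal)
          = (c ^ p.toReal) ^ (1 / p.toReal) *
              ((ENNReal.ofReal (t ^ (1 + α))) ^ (1 / p.toReal) * A ^ (1 / p.toReal)) := by
            rw [hint, ENNReal.mul_rpow_of_nonneg _ _ hinv, ENNReal.mul_rpow_of_nonneg _ _ hinv]
        _ = ENNReal.ofReal (t ^ ((1 + α) / p.toReal - 1) * |φ t|) * A ^ (1 / p.toReal) := by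
            have hreal : |φ t / t| * t ^ ((1 + α) * (1 / p.toReal))
                = t ^ ((1 + α) / p.toReal - 1) * |φ t| := by
              rw [mul_one_div, Real.rpow_sub ht0, Real.rpow_one, abs_div, abs_of_pos ht0]
              ring
            rw [← ENNReal.rpow_mul, mul_one_div, div_self hqne, ENNReal.rpow_one,
              ENNReal.ofReal_rpow_of_nonneg (Real.rpow_nonneg ht0.le _) hinv,
              ← Real.rpow_mul ht0.le, ← mul_assoc, hcdef,
              ← ENNReal.ofReal_mul (abs_nonneg _), hreal]
        _ ≤ ENNReal.ofReal (t ^ ((1 + α) / p.toReal - 1) * |φ t|) * M :=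
            mul_le_mul_right hA_le _
    -- assemble
    calc (∫⁻ x : ℝ,
          ENNReal.ofReal (‖Hc φ f ((x:ℂ) + (y:ℂ) * Complex.I)‖ ^ p.toReal * |x| ^ α))
            ^ (1 / p.toReal)
        ≤ (∫⁻ x, (∫⁻ t, g t x ∂μ₀) ^ p.toReal ∂ν) ^ (1 / p.toReal) :=
          ENNReal.rpow_le_rpow step2 hinv
      _ ≤ ∫⁻ t, (∫⁻ x, g t x ^ p.toReal ∂ν) ^ (1 / p.toReal) ∂μ₀ := mink_ae μ₀ ν hgm hq1
      _ ≤ ∫⁻ t in Ioi (0:ℝ),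
            ENNReal.ofReal (t ^ ((1 + α) / p.toReal - 1) * |φ t|) * M ∂volume := by
          rw [hμdef]
          apply lintegral_mono_ae
          filter_upwards [ae_restrict_mem measurableSet_Ioi] with t ht
          exact step4 t ht
      _ = kernE p α φ * M := by
          rw [kernE, lintegral_mul_const' _ _ hfN.ne]
end

section
/- Let α > -1, and let x₀ + iy₀ ∈ ℂ₊ (y₀ > 0) and x + iy in the open unit disc. Then ∫_{B(x₀ + (y₀/2)x, y₀ + (y₀/2)y)} |u|^α du ≍ ∫_{B(x₀, y₀)} |u|^α du, with implied constants independent of x₀, y₀, x, y. -/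
open MeasureTheory Complex Set Real Filter
open scoped ENNReal

section Aux

variable {α : ℝ}

private lemma g_nn (α : ℝ) (u : ℝ) : 0 ≤ |u| ^ α := Real.rpow_nonneg (abs_nonneg u) α

private lemma refl_Ioo (α a b : ℝ) :
    ∫ u in Ioo (-b) (-a), |u| ^ α = ∫ u in Ioo a b, |u| ^ α := by
  have A : MeasurableEmbedding fun x : ℝ => -x :=
    (Homeomorph.neg ℝ).isClosedEmbedding.measurableEmbedding
  have h := A.setIntegral_map (μ := volume) (fun u : ℝ => |u| ^ α) (Ioo a b)
  rw [Measure.map_neg_eq_self (volume : Measure ℝ)] at h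
  rw [h, neg_preimage, neg_Ioo]
  simp [abs_neg]

private lemma intOn_pos (hα : -1 < α) (T : ℝ) :
    IntegrableOn (fun u : ℝ => |u| ^ α) (Ioo 0 T) := by
  rcases le_or_gt T 0 with hT | hT
  · rw [Ioo_eq_empty (by intro h; linarith)]; exact integrableOn_empty
  · have h1 : IntegrableOn (fun x : ℝ => x ^ α) (Ioo 0 T) :=
      (intervalIntegrable_iff_integrableOn_Ioo_of_le hT.le).mp
        (intervalIntegral.intervalIntegrable_rpow' hα)
    exact h1.congr_fun (fun x hx => by rw [abs_of_pos hx.1]) measurableSet_Ioo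

private lemma intOn (hα : -1 < α) (a b : ℝ) :
    IntegrableOn (fun u : ℝ => |u| ^ α) (Ioo a b) := by
  set T := |a| + |b| + 1 with hT
  have m : MeasurableEmbedding fun x : ℝ => -x :=
    (Homeomorph.neg ℝ).isClosedEmbedding.measurableEmbedding
  have hneg : IntegrableOn (fun u : ℝ => |u| ^ α) (Ioo (-T) 0) := by
    rw [← Measure.map_neg_eq_self (volume : Measure ℝ), m.integrableOn_map_iff]
    simp_rw [Function.comp_def, abs_neg, neg_preimage, neg_Ioo, neg_zero, neg_neg]
    exact intOn_pos hα T
  have hsing : IntegrableOn (fun u : ℝ => |u| ^ α) ({0} : Set ℝ) := by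
    have h0 : (volume : Measure ℝ).restrict ({0} : Set ℝ) = 0 := by
      rw [Measure.restrict_eq_zero]; exact Real.volume_singleton
    rw [IntegrableOn, h0]; exact integrable_zero_measure
  have hsub : Ioo a b ⊆ Ioo (-T) 0 ∪ ({0} ∪ Ioo 0 T) := by
    intro u hu
    obtain ⟨hu1, hu2⟩ := hu
    have ha := neg_abs_le a; have hb := le_abs_self b
    have ha' := abs_nonneg a; have hb' := abs_nonneg b
    have h1 : -T < u := by simp only [hT]; linarith
    have h2 : u < T := by simp only [hT]; linarith
    rcases lt_trichotomy u 0 with h | h | h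
    · exact Or.inl ⟨h1, h⟩
    · exact Or.inr (Or.inl (by simp [h]))
    · exact Or.inr (Or.inr ⟨h, h2⟩)
  exact ((hneg.union (hsing.union (intOn_pos hα T))).mono_set hsub)

private lemma mono_int (hα : -1 < α) {s : Set ℝ} {a b : ℝ} (hs : s ⊆ Ioo a b) :
    ∫ u in s, |u| ^ α ≤ ∫ u in Ioo a b, |u| ^ α :=
  setIntegral_mono_set (intOn hα a b)
    (Filter.Eventually.of_forall fun u => g_nn α u) (HasSubset.Subset.eventuallyLE hs)

private lemma value (hα : -1 < α) {M : ℝ} (hM : 0 < M) :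
    ∫ u in Ioo (-M) M, |u| ^ α = 2 * (M ^ (α + 1) / (α + 1)) := by
  have hpos : ∫ u in Ioo (0:ℝ) M, |u| ^ α = M ^ (α + 1) / (α + 1) := by
    rw [setIntegral_congr_fun measurableSet_Ioo
      (fun x hx => by simp [abs_of_pos hx.1] :
        EqOn (fun u : ℝ => |u| ^ α) (fun x : ℝ => x ^ α) (Ioo 0 M))]
    rw [← integral_Ioc_eq_integral_Ioo, ← intervalIntegral.integral_of_le hM.le,
      integral_rpow (Or.inl hα), Real.zero_rpow (by linarith), sub_zero]
  have hneg : ∫ u in Ioo (-M) (0:ℝ), |u| ^ α = M ^ (α + 1) / (α + 1) := by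
    have h := refl_Ioo α 0 M
    rw [neg_zero] at h
    rw [h, hpos]
  have hIco : ∫ u in Ico (0:ℝ) M, |u| ^ α = M ^ (α + 1) / (α + 1) := by
    rw [integral_Ico_eq_integral_Ioo, hpos]
  have hsplit : Ioo (-M) M = Ioo (-M) 0 ∪ Ico 0 M :=
    (Set.Ioo_union_Ico_eq_Ioo (by linarith) hM.le).symm
  have hdisj : Disjoint (Ioo (-M) (0:ℝ)) (Ico (0:ℝ) M) := by
    rw [Set.disjoint_left]; rintro u ⟨_, h2⟩ ⟨h3, _⟩; exact absurd h3 (not_le.mpr h2)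
  rw [hsplit, setIntegral_union hdisj measurableSet_Ico
    ((intOn hα (-M) 0)) ((intOn hα (-1) M).mono_set (fun u hu => ⟨by
      obtain ⟨h1, _⟩ := hu; linarith, hu.2⟩)),
    hneg, hIco]
  ring

private lemma upper (hα : -1 < α) {c r : ℝ} (hc : 0 ≤ c) (hr : 0 < r) :
    ∫ u in Ioo (c - r) (c + r), |u| ^ α ≤
      (2 * max 1 ((3:ℝ) ^ (-α)) + 6 / (α + 1)) * (r * (c + r) ^ α) := by
  have hβ : (0:ℝ) < α + 1 := by linarith
  have hMpos : (0:ℝ) < c + r := by linarith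
  have hMα : (0:ℝ) < (c + r) ^ α := Real.rpow_pos_of_pos hMpos α
  have hmax1 : (1:ℝ) ≤ max 1 ((3:ℝ) ^ (-α)) := le_max_left _ _
  have hdiv : (0:ℝ) < 6 / (α + 1) := by positivity
  rcases le_or_gt (2 * r) c with h2 | h2
  · -- far from origin
    have key : ∀ u ∈ Ioo (c - r) (c + r), |u| ^ α ≤ max 1 ((3:ℝ) ^ (-α)) * (c + r) ^ α := by
      intro u hu
      obtain ⟨hu1, hu2⟩ := hu
      have hu0 : 0 < u := by linarith
      rw [abs_of_pos hu0]
      rcases le_or_gt 0 α with hα0 | hα0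
      · have h1 : u ^ α ≤ (c + r) ^ α := Real.rpow_le_rpow hu0.le hu2.le hα0
        nlinarith
      · have h3 : (c + r) / 3 ≤ u := by linarith
        have h4 : u ^ α ≤ ((c + r) / 3) ^ α :=
          Real.rpow_le_rpow_of_nonpos (by linarith) h3 hα0.le
        have heq : ((c + r) / 3 : ℝ) ^ α = (3:ℝ) ^ (-α) * (c + r) ^ α := by
          rw [Real.div_rpow hMpos.le (by norm_num), Real.rpow_neg (by norm_num)]
          ring
        have h5 : (3:ℝ) ^ (-α) ≤ max 1 ((3:ℝ) ^ (-α)) := le_max_right _ _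
        nlinarith
    have hconst : IntegrableOn (fun _ : ℝ => max 1 ((3:ℝ) ^ (-α)) * (c + r) ^ α)
        (Ioo (c - r) (c + r)) := by
      refine (integrableOn_const_iff (by finiteness)).mpr (Or.inr ?_)
      rw [Real.volume_Ioo]; exact ENNReal.ofReal_lt_top
    have h6 := setIntegral_mono_on (intOn hα _ _) hconst measurableSet_Ioo key
    rw [setIntegral_const, Real.volume_real_Ioo_of_le (by linarith),
      smul_eq_mul, show (c + r - (c - r)) = 2 * r by ring] at h6
    nlinarith [mul_pos hr hMα]
  · -- near origin
    have hsub : Ioo (c - r) (c + r) ⊆ Ioo (-(c + r)) (c + r) := by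
      intro u hu; obtain ⟨h1, h2⟩ := hu; exact ⟨by linarith, h2⟩
    have h8 := (mono_int hα hsub).trans_eq (value hα hMpos)
    have h9 : (c + r) ^ (α + 1) = (c + r) ^ α * (c + r) := by
      rw [Real.rpow_add hMpos, Real.rpow_one]
    have h10 : 2 * ((c + r) ^ (α + 1) / (α + 1)) ≤ 6 / (α + 1) * (r * (c + r) ^ α) := by
      rw [h9, show 2 * ((c + r) ^ α * (c + r) / (α + 1)) = 2 * ((c + r) ^ α * (c + r)) / (α + 1)
          by ring,
        show 6 / (α + 1) * (r * (c + r) ^ α) = 6 * (r * (c + r) ^ α) / (α + 1) by ring]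
      refine div_le_div_of_nonneg_right ?_ hβ.le
      nlinarith
    nlinarith [mul_pos hr hMα, mul_pos (mul_pos two_pos hr)
      (mul_pos (lt_of_lt_of_le one_pos hmax1) hMα)]

private lemma lower (hα : -1 < α) {c r : ℝ} (hc : 0 ≤ c) (hr : 0 < r) :
    min 1 ((2:ℝ) ^ (-α)) / 2 * (r * (c + r) ^ α) ≤ ∫ u in Ioo (c - r) (c + r), |u| ^ α := by
  have hMpos : (0:ℝ) < c + r := by linarith
  have hMα : (0:ℝ) < (c + r) ^ α := Real.rpow_pos_of_pos hMpos α
  have hmin : (0:ℝ) < min 1 ((2:ℝ) ^ (-α)) :=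
    lt_min one_pos (Real.rpow_pos_of_pos two_pos _)
  have hmin1 : min 1 ((2:ℝ) ^ (-α)) ≤ 1 := min_le_left _ _
  have hJ : Ioo (c + r / 2) (c + r) ⊆ Ioo (c - r) (c + r) := by
    intro u hu; obtain ⟨h1, h2⟩ := hu; exact ⟨by linarith, h2⟩
  have key : ∀ u ∈ Ioo (c + r / 2) (c + r),
      min 1 ((2:ℝ) ^ (-α)) * (c + r) ^ α ≤ |u| ^ α := by
    intro u hu
    obtain ⟨hu1, hu2⟩ := hu
    have hu0 : 0 < u := by linarith
    rw [abs_of_pos hu0]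
    rcases le_or_gt 0 α with hα0 | hα0
    · have h1 : ((c + r) / 2) ^ α ≤ u ^ α :=
        Real.rpow_le_rpow (by linarith) (by linarith) hα0
      have heq : ((c + r) / 2 : ℝ) ^ α = (2:ℝ) ^ (-α) * (c + r) ^ α := by
        rw [Real.div_rpow hMpos.le (by norm_num), Real.rpow_neg (by norm_num)]
        ring
      have h5 : min 1 ((2:ℝ) ^ (-α)) ≤ (2:ℝ) ^ (-α) := min_le_right _ _
      nlinarith
    · have h1 : (c + r) ^ α ≤ u ^ α :=
        Real.rpow_le_rpow_of_nonpos hu0 hu2.le hα0.le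
      nlinarith
  have hconst : IntegrableOn (fun _ : ℝ => min 1 ((2:ℝ) ^ (-α)) * (c + r) ^ α)
      (Ioo (c + r / 2) (c + r)) := by
    refine (integrableOn_const_iff (by finiteness)).mpr (Or.inr ?_)
    rw [Real.volume_Ioo]; exact ENNReal.ofReal_lt_top
  have h6 := setIntegral_mono_on hconst ((intOn hα _ _).mono_set hJ) measurableSet_Ioo key
  rw [setIntegral_const, Real.volume_real_Ioo_of_le (by linarith),
    smul_eq_mul, show (c + r - (c + r / 2)) = r / 2 by ring] at h6
  calc min 1 ((2:ℝ) ^ (-α)) / 2 * (r * (c + r) ^ α)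
      = r / 2 * (min 1 ((2:ℝ) ^ (-α)) * (c + r) ^ α) := by ring
    _ ≤ ∫ u in Ioo (c + r / 2) (c + r), |u| ^ α := h6
    _ ≤ ∫ u in Ioo (c - r) (c + r), |u| ^ α := mono_int hα hJ

private lemma core (hα : -1 < α) (c r : ℝ) (hr : 0 < r) :
    min 1 ((2:ℝ) ^ (-α)) / 2 * (r * (|c| + r) ^ α) ≤ ∫ u in Metric.ball c r, |u| ^ α ∧
    ∫ u in Metric.ball c r, |u| ^ α ≤
      (2 * max 1 ((3:ℝ) ^ (-α)) + 6 / (α + 1)) * (r * (|c| + r) ^ α) := by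
  rw [Real.ball_eq_Ioo]
  rcases le_or_gt 0 c with hc | hc
  · rw [_root_.abs_of_nonneg hc]; exact ⟨lower hα hc hr, upper hα hc hr⟩
  · have h0 : (0:ℝ) ≤ -c := by linarith
    have heq : ∫ u in Ioo (c - r) (c + r), |u| ^ α = ∫ u in Ioo (-c - r) (-c + r), |u| ^ α := by
      rw [show c - r = -(-c + r) by ring, show c + r = -(-c - r) by ring, refl_Ioo]
    rw [_root_.abs_of_neg hc, heq]
    exact ⟨lower hα h0 hr, upper hα h0 hr⟩

end Aux

theorem stmt12 (α : ℝ) (hα : -1 < α) :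
    ∃ c > (0:ℝ), ∃ C > (0:ℝ), ∀ x₀ y₀ x y : ℝ, 0 < y₀ → x ^ 2 + y ^ 2 < 1 →
      c * ∫ u in Metric.ball x₀ y₀, |u| ^ α ≤
        (∫ u in Metric.ball (x₀ + y₀ / 2 * x) (y₀ + y₀ / 2 * y), |u| ^ α) ∧
      (∫ u in Metric.ball (x₀ + y₀ / 2 * x) (y₀ + y₀ / 2 * y), |u| ^ α) ≤
        C * ∫ u in Metric.ball x₀ y₀, |u| ^ α := by
  have hβ : (0:ℝ) < α + 1 := by linarith
  obtain ⟨A, hAdef⟩ : ∃ A : ℝ, A = min 1 ((2:ℝ) ^ (-α)) / 2 := ⟨_, rfl⟩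
  obtain ⟨B, hBdef⟩ : ∃ B : ℝ, B = 2 * max 1 ((3:ℝ) ^ (-α)) + 6 / (α + 1) := ⟨_, rfl⟩
  obtain ⟨k, hkdef⟩ : ∃ k : ℝ, k = min ((2:ℝ) ^ α) ((3:ℝ) ^ (-α)) := ⟨_, rfl⟩
  obtain ⟨K, hKdef⟩ : ∃ K : ℝ, K = max ((2:ℝ) ^ α) ((3:ℝ) ^ (-α)) := ⟨_, rfl⟩
  have hA : 0 < A := by
    rw [hAdef]
    have := lt_min one_pos (Real.rpow_pos_of_pos two_pos (-α)); positivity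
  have hB : 0 < B := by
    rw [hBdef]
    have h1 : (0:ℝ) < 2 * max 1 ((3:ℝ) ^ (-α)) := by
      have := le_max_left (1:ℝ) ((3:ℝ) ^ (-α)); linarith
    have h2 : (0:ℝ) < 6 / (α + 1) := by positivity
    linarith
  have hk : 0 < k := by
    rw [hkdef]
    exact lt_min (Real.rpow_pos_of_pos two_pos α) (Real.rpow_pos_of_pos (by norm_num) (-α))
  have hK : 0 < K := by
    rw [hKdef]
    exact lt_of_lt_of_le (lt_min (Real.rpow_pos_of_pos two_pos α)
      (Real.rpow_pos_of_pos (by norm_num) (-α))) min_le_max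
  refine ⟨A * k / (2 * B), by positivity, 3 * B * K / (2 * A), by positivity, ?_⟩
  intro x₀ y₀ x y hy₀ hxy
  have hx1 : |x| ≤ 1 := by rw [abs_le]; constructor <;> nlinarith
  have hy1 : |y| ≤ 1 := by rw [abs_le]; constructor <;> nlinarith
  have hy1' : -1 ≤ y := (abs_le.mp hy1).1
  have hy2' : y ≤ 1 := (abs_le.mp hy1).2
  obtain ⟨c', hc'def⟩ : ∃ c' : ℝ, c' = x₀ + y₀ / 2 * x := ⟨_, rfl⟩
  obtain ⟨r', hr'def⟩ : ∃ r' : ℝ, r' = y₀ + y₀ / 2 * y := ⟨_, rfl⟩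
  rw [← hc'def, ← hr'def]
  have hr'l : y₀ / 2 ≤ r' := by
    have h := mul_nonneg (by linarith : (0:ℝ) ≤ y₀ / 2) (by linarith : (0:ℝ) ≤ 1 + y)
    rw [hr'def]; nlinarith
  have hr'u : r' ≤ 3 * y₀ / 2 := by
    have h := mul_nonneg (by linarith : (0:ℝ) ≤ y₀ / 2) (by linarith : (0:ℝ) ≤ 1 - y)
    rw [hr'def]; nlinarith
  have hr' : 0 < r' := lt_of_lt_of_le (by linarith) hr'l
  have habs : |y₀ / 2 * x| ≤ y₀ / 2 := by
    rw [abs_mul, _root_.abs_of_pos (by linarith : (0:ℝ) < y₀ / 2)]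
    nlinarith [abs_nonneg x]
  have hcu : |c'| ≤ |x₀| + y₀ / 2 := by
    calc |c'| ≤ |x₀| + |y₀ / 2 * x| := by rw [hc'def]; exact abs_add_le _ _
      _ ≤ |x₀| + y₀ / 2 := by linarith
  have hcl : |x₀| - y₀ / 2 ≤ |c'| := by
    have h1 : |x₀| - |c'| ≤ |x₀ - c'| := abs_sub_abs_le_abs_sub _ _
    have h2 : |x₀ - c'| = |y₀ / 2 * x| := by
      rw [show x₀ - c' = -(y₀ / 2 * x) by rw [hc'def]; ring, abs_neg]
    linarith
  have hM₀ : (0:ℝ) < |x₀| + y₀ := by have := abs_nonneg x₀; linarith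
  have hM' : (0:ℝ) < |c'| + r' := by have := abs_nonneg c'; linarith
  have hM'u : |c'| + r' ≤ 2 * (|x₀| + y₀) := by have := abs_nonneg x₀; linarith
  have hM'l : (|x₀| + y₀) / 3 ≤ |c'| + r' := by have := abs_nonneg c'; linarith
  have hMα₀ : (0:ℝ) < (|x₀| + y₀) ^ α := Real.rpow_pos_of_pos hM₀ α
  have hMα' : (0:ℝ) < (|c'| + r') ^ α := Real.rpow_pos_of_pos hM' α
  have hKa : (|c'| + r') ^ α ≤ K * (|x₀| + y₀) ^ α := by
    rcases le_or_gt 0 α with h | h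
    · have h1 : (|c'| + r') ^ α ≤ (2 * (|x₀| + y₀)) ^ α :=
        Real.rpow_le_rpow hM'.le hM'u h
      have h2 : (2 * (|x₀| + y₀)) ^ α = (2:ℝ) ^ α * (|x₀| + y₀) ^ α :=
        Real.mul_rpow (by norm_num) hM₀.le
      have h3 : (2:ℝ) ^ α ≤ K := by rw [hKdef]; exact le_max_left _ _
      calc (|c'| + r') ^ α ≤ (2:ℝ) ^ α * (|x₀| + y₀) ^ α := h2 ▸ h1
        _ ≤ K * (|x₀| + y₀) ^ α := mul_le_mul_of_nonneg_right h3 hMα₀.le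
    · have h1 : (|c'| + r') ^ α ≤ ((|x₀| + y₀) / 3) ^ α :=
        Real.rpow_le_rpow_of_nonpos (by positivity) hM'l h.le
      have h2 : ((|x₀| + y₀) / 3 : ℝ) ^ α = (3:ℝ) ^ (-α) * (|x₀| + y₀) ^ α := by
        rw [Real.div_rpow hM₀.le (by norm_num), Real.rpow_neg (by norm_num)]
        ring
      have h3 : (3:ℝ) ^ (-α) ≤ K := by rw [hKdef]; exact le_max_right _ _
      calc (|c'| + r') ^ α ≤ (3:ℝ) ^ (-α) * (|x₀| + y₀) ^ α := h2 ▸ h1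
        _ ≤ K * (|x₀| + y₀) ^ α := mul_le_mul_of_nonneg_right h3 hMα₀.le
  have hka : k * (|x₀| + y₀) ^ α ≤ (|c'| + r') ^ α := by
    rcases le_or_gt 0 α with h | h
    · have h1 : ((|x₀| + y₀) / 3) ^ α ≤ (|c'| + r') ^ α :=
        Real.rpow_le_rpow (by positivity) hM'l h
      have h2 : ((|x₀| + y₀) / 3 : ℝ) ^ α = (3:ℝ) ^ (-α) * (|x₀| + y₀) ^ α := by
        rw [Real.div_rpow hM₀.le (by norm_num), Real.rpow_neg (by norm_num)]
        ring
      have h3 : k ≤ (3:ℝ) ^ (-α) := by rw [hkdef]; exact min_le_right _ _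
      calc k * (|x₀| + y₀) ^ α ≤ (3:ℝ) ^ (-α) * (|x₀| + y₀) ^ α :=
            mul_le_mul_of_nonneg_right h3 hMα₀.le
        _ ≤ (|c'| + r') ^ α := h2 ▸ h1
    · have h1 : (2 * (|x₀| + y₀)) ^ α ≤ (|c'| + r') ^ α :=
        Real.rpow_le_rpow_of_nonpos hM' hM'u h.le
      have h2 : (2 * (|x₀| + y₀)) ^ α = (2:ℝ) ^ α * (|x₀| + y₀) ^ α :=
        Real.mul_rpow (by norm_num) hM₀.le
      have h3 : k ≤ (2:ℝ) ^ α := by rw [hkdef]; exact min_le_left _ _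
      calc k * (|x₀| + y₀) ^ α ≤ (2:ℝ) ^ α * (|x₀| + y₀) ^ α :=
            mul_le_mul_of_nonneg_right h3 hMα₀.le
        _ ≤ (|c'| + r') ^ α := h2 ▸ h1
  have hcore' := core hα c' r' hr'
  have hcore₀ := core hα x₀ y₀ hy₀
  rw [← hAdef, ← hBdef] at hcore' hcore₀
  obtain ⟨hlow', hupp'⟩ := hcore'
  obtain ⟨hlow₀, hupp₀⟩ := hcore₀
  have hQ : 0 < y₀ * (|x₀| + y₀) ^ α := mul_pos hy₀ hMα₀
  have h5 : k / 2 * (y₀ * (|x₀| + y₀) ^ α) ≤ r' * (|c'| + r') ^ α := by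
    have h := mul_le_mul hr'l hka (mul_nonneg hk.le hMα₀.le) hr'.le
    calc k / 2 * (y₀ * (|x₀| + y₀) ^ α) = y₀ / 2 * (k * (|x₀| + y₀) ^ α) := by ring
      _ ≤ r' * (|c'| + r') ^ α := h
  have h6 : r' * (|c'| + r') ^ α ≤ 3 * K / 2 * (y₀ * (|x₀| + y₀) ^ α) := by
    have h := mul_le_mul hr'u hKa hMα'.le (by linarith : (0:ℝ) ≤ 3 * y₀ / 2)
    calc r' * (|c'| + r') ^ α ≤ 3 * y₀ / 2 * (K * (|x₀| + y₀) ^ α) := h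
      _ = 3 * K / 2 * (y₀ * (|x₀| + y₀) ^ α) := by ring
  constructor
  · calc A * k / (2 * B) * ∫ u in Metric.ball x₀ y₀, |u| ^ α
        ≤ A * k / (2 * B) * (B * (y₀ * (|x₀| + y₀) ^ α)) := by
          apply mul_le_mul_of_nonneg_left hupp₀
          positivity
      _ = A * (k / 2 * (y₀ * (|x₀| + y₀) ^ α)) := by field_simp
      _ ≤ A * (r' * (|c'| + r') ^ α) := mul_le_mul_of_nonneg_left h5 hA.le
      _ ≤ ∫ u in Metric.ball c' r', |u| ^ α := hlow'
  · calc ∫ u in Metric.ball c' r', |u| ^ α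
        ≤ B * (r' * (|c'| + r') ^ α) := hupp'
      _ ≤ B * (3 * K / 2 * (y₀ * (|x₀| + y₀) ^ α)) := mul_le_mul_of_nonneg_left h6 hB.le
      _ = 3 * B * K / (2 * A) * (A * (y₀ * (|x₀| + y₀) ^ α)) := by field_simp
      _ ≤ 3 * B * K / (2 * A) * ∫ u in Metric.ball x₀ y₀, |u| ^ α := by
          apply mul_le_mul_of_nonneg_left hlow₀
          positivity
end

section
/- Let 1 ≤ p < ∞, α > -1. If f is holomorphic on ℂ₊ and satisfies the pointwise bound |f(x+iy)| ≤ C(p,α) (∫_{B(x,y)}|u|^α du)^{-1/p} ‖f‖ for some norm value ‖f‖ and all x+iy ∈ ℂ₊, then its derivative satisfies |f'(x+iy)| ≤ C'(p,α) · y^{-1} · (∫_{B(x,y)}|u|^α du)^{-1/p} ‖f‖ for all x+iy ∈ ℂ₊, where C'(p,α) depends only on p and α. -/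
open MeasureTheory Complex Set Real Filter
open scoped ENNReal

lemma absRpow_II {α : ℝ} (hα : -1 < α) (a b : ℝ) :
    IntervalIntegrable (fun u : ℝ => |u| ^ α) volume a b := by
  have key : ∀ c : ℝ, IntervalIntegrable (fun u : ℝ => |u| ^ α) volume 0 c := by
    have pos : ∀ c : ℝ, 0 ≤ c → IntervalIntegrable (fun u : ℝ => |u| ^ α) volume 0 c := by
      intro c hc
      rw [intervalIntegrable_iff_integrableOn_Ioo_of_le hc]
      have h1 : IntegrableOn (fun u : ℝ => u ^ α) (Ioo 0 c) volume :=
        (intervalIntegrable_iff_integrableOn_Ioo_of_le hc).1 (intervalIntegral.intervalIntegrable_rpow' hα)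
      exact h1.congr_fun (fun x hx => by rw [abs_of_pos hx.1]) measurableSet_Ioo
    intro c
    rcases le_total 0 c with hc | hc
    · exact pos c hc
    · have h2 := (IntervalIntegrable.iff_comp_neg (f := fun u : ℝ => |u| ^ α) enorm_ne_top).mp (pos (-c) (by linarith))
      simpa using h2
  exact (key a).symm.trans (key b)

lemma absRpow_IOn {α : ℝ} (hα : -1 < α) (a b : ℝ) :
    IntegrableOn (fun u : ℝ => |u| ^ α) (Ioo a b) volume := by
  rcases le_total a b with h | h
  · exact (intervalIntegrable_iff_integrableOn_Ioo_of_le h).1 (absRpow_II hα a b)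
  · rw [Ioo_eq_empty_of_le h]; exact integrableOn_empty

lemma absRpow_pos {α : ℝ} (hα : -1 < α) {a b : ℝ} (hab : a < b) :
    0 < ∫ u in Ioo a b, |u| ^ α := by
  rw [setIntegral_pos_iff_support_of_nonneg_ae]
  · have hsub : Ioo a b \ {0} ⊆ (Function.support fun u : ℝ => |u| ^ α) ∩ Ioo a b := by
      rintro x ⟨hx, hx0⟩
      refine ⟨?_, hx⟩
      have : 0 < |x| := abs_pos.2 (by simpa using hx0)
      exact (Real.rpow_pos_of_pos this α).ne'
    refine lt_of_lt_of_le ?_ (measure_mono hsub)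
    rw [measure_diff_null (measure_singleton 0)]
    simpa using hab
  · exact Eventually.of_forall fun x => Real.rpow_nonneg (abs_nonneg x) α
  · exact absRpow_IOn hα a b

lemma absRpow_symm_eval {α : ℝ} (hα : -1 < α) {R : ℝ} (hR : 0 ≤ R) :
    ∫ u in Ioo (-R) R, |u| ^ α = 2 * R ^ (α + 1) / (α + 1) := by
  have hβ : (0:ℝ) < α + 1 := by linarith
  have h0 : ∫ u in (0:ℝ)..R, |u| ^ α = R ^ (α + 1) / (α + 1) := by
    rw [intervalIntegral.integral_congr (g := fun u : ℝ => u ^ α)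
      (fun x hx => by rw [uIcc_of_le hR] at hx; rw [_root_.abs_of_nonneg hx.1]),
      integral_rpow (Or.inl hα), Real.zero_rpow hβ.ne', sub_zero]
  have hneg : ∫ u in (-R:ℝ)..0, |u| ^ α = R ^ (α + 1) / (α + 1) := by
    have := intervalIntegral.integral_comp_neg (a := 0) (b := R) (fun u : ℝ => |u| ^ α)
    simp only [abs_neg, neg_zero] at this
    rw [← this, h0]
  have hIoo : ∫ u in Ioo (-R) R, |u| ^ α = ∫ u in (-R:ℝ)..R, |u| ^ α := by
    rw [intervalIntegral.integral_of_le (by linarith), integral_Ioc_eq_integral_Ioo]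
  rw [hIoo, ← intervalIntegral.integral_add_adjacent_intervals
    (absRpow_II hα (-R) 0) (absRpow_II hα 0 R), h0, hneg]
  ring

lemma ball_refl {α : ℝ} (x r : ℝ) :
    ∫ u in Metric.ball (-x) r, |u| ^ α = ∫ u in Metric.ball x r, |u| ^ α := by
  rcases le_or_gt r 0 with hr | hr
  · rw [Metric.ball_eq_empty.2 hr, Metric.ball_eq_empty.2 hr]
  · rw [Real.ball_eq_Ioo, Real.ball_eq_Ioo]
    have h1 : ∫ u in Ioo (-x - r) (-x + r), |u| ^ α = ∫ u in (-x - r)..(-x + r), |u| ^ α := by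
      rw [intervalIntegral.integral_of_le (by linarith), integral_Ioc_eq_integral_Ioo]
    have h2 : ∫ u in Ioo (x - r) (x + r), |u| ^ α = ∫ u in (x - r)..(x + r), |u| ^ α := by
      rw [intervalIntegral.integral_of_le (by linarith), integral_Ioc_eq_integral_Ioo]
    rw [h1, h2]
    have := intervalIntegral.integral_comp_neg (a := x - r) (b := x + r) (fun u : ℝ => |u| ^ α)
    simp only [abs_neg] at this
    rw [this]
    have e1 : -(x + r) = -x - r := by ring
    have e2 : -(x - r) = -x + r := by ring
    rw [e1, e2]

lemma rpow_low {α : ℝ} (c d x u : ℝ) (hc : 0 < c) (hx : 0 < x)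
    (h1 : c * x ≤ u) (h2 : u ≤ d * x) : x ^ α * min (c ^ α) (d ^ α) ≤ u ^ α := by
  have hu : 0 < u := lt_of_lt_of_le (by positivity) h1
  have hd : 0 < d := by nlinarith
  rcases le_total 0 α with hα | hα
  · calc x ^ α * min (c ^ α) (d ^ α) ≤ x ^ α * c ^ α :=
          mul_le_mul_of_nonneg_left (min_le_left _ _) (Real.rpow_nonneg hx.le _)
    _ = (c * x) ^ α := by rw [Real.mul_rpow hc.le hx.le]; ring
    _ ≤ u ^ α := Real.rpow_le_rpow (by positivity) h1 hα
  · calc x ^ α * min (c ^ α) (d ^ α) ≤ x ^ α * d ^ α :=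
          mul_le_mul_of_nonneg_left (min_le_right _ _) (Real.rpow_nonneg hx.le _)
    _ = (d * x) ^ α := by rw [Real.mul_rpow hd.le hx.le]; ring
    _ ≤ u ^ α := Real.rpow_le_rpow_of_nonpos hu h2 hα

lemma rpow_high {α : ℝ} (c d x u : ℝ) (hc : 0 < c) (hx : 0 < x)
    (h1 : c * x ≤ u) (h2 : u ≤ d * x) : u ^ α ≤ x ^ α * max (c ^ α) (d ^ α) := by
  have hu : 0 < u := lt_of_lt_of_le (by positivity) h1
  have hd : 0 < d := by nlinarith
  rcases le_total 0 α with hα | hα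
  · calc u ^ α ≤ (d * x) ^ α := Real.rpow_le_rpow hu.le h2 hα
    _ = x ^ α * d ^ α := by rw [Real.mul_rpow hd.le hx.le]; ring
    _ ≤ x ^ α * max (c ^ α) (d ^ α) :=
          mul_le_mul_of_nonneg_left (le_max_right _ _) (Real.rpow_nonneg hx.le _)
  · calc u ^ α ≤ (c * x) ^ α := Real.rpow_le_rpow_of_nonpos (by positivity) h1 hα
    _ = x ^ α * c ^ α := by rw [Real.mul_rpow hc.le hx.le]; ring
    _ ≤ x ^ α * max (c ^ α) (d ^ α) :=
          mul_le_mul_of_nonneg_left (le_max_left _ _) (Real.rpow_nonneg hx.le _)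

lemma ball_int_eq {α : ℝ} (x r : ℝ) :
    ∫ u in Metric.ball x r, |u| ^ α = ∫ u in Ioo (x - r) (x + r), |u| ^ α := by
  rw [Real.ball_eq_Ioo]

set_option maxHeartbeats 2000000 in
lemma doubling {α : ℝ} (hα : -1 < α) : ∃ c : ℝ, 0 < c ∧ c ≤ 1 ∧ ∀ x y : ℝ, 0 < y →
    c * ∫ u in Metric.ball x y, |u| ^ α ≤ ∫ u in Metric.ball x (y / 4), |u| ^ α := by
  have hβ : (0:ℝ) < α + 1 := by linarith
  set mA : ℝ := min ((1/16:ℝ) ^ α) ((3:ℝ) ^ α) with hmA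
  set mB : ℝ := min ((1/2:ℝ) ^ α) ((3/2:ℝ) ^ α) with hmB
  set MB : ℝ := max ((1/2:ℝ) ^ α) ((3/2:ℝ) ^ α) with hMB
  have hmA0 : 0 < mA := lt_min (Real.rpow_pos_of_pos (by norm_num) _)
    (Real.rpow_pos_of_pos (by norm_num) _)
  have hmB0 : 0 < mB := lt_min (Real.rpow_pos_of_pos (by norm_num) _)
    (Real.rpow_pos_of_pos (by norm_num) _)
  have hMB0 : 0 < MB := lt_of_lt_of_le hmB0 min_le_max
  have h3β : (0:ℝ) < (3:ℝ) ^ (α + 1) := Real.rpow_pos_of_pos (by norm_num) _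
  set cA : ℝ := (α + 1) * mA / (32 * (3:ℝ) ^ (α + 1)) with hcA
  set cB : ℝ := mB / (32 * MB) with hcB
  have hcA0 : 0 < cA := by positivity
  have hcB0 : 0 < cB := by positivity
  refine ⟨min (min cA cB) 1, by positivity, min_le_right _ _, ?_⟩
  set c : ℝ := min (min cA cB) 1 with hc
  have hnn : ∀ a b : ℝ, 0 ≤ ∫ u in Ioo a b, |u| ^ α := fun a b =>
    setIntegral_nonneg measurableSet_Ioo fun u _ => Real.rpow_nonneg (abs_nonneg u) α
  have key : ∀ x y : ℝ, 0 ≤ x → 0 < y →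
      c * ∫ u in Metric.ball x y, |u| ^ α ≤ ∫ u in Metric.ball x (y / 4), |u| ^ α := by
    intro x y hx hy
    rw [ball_int_eq, ball_int_eq]
    -- the small interval lower bound machinery
    have hsub : Ioo (x + y/16) (x + y/8) ⊆ Ioo (x - y/4) (x + y/4) :=
      Ioo_subset_Ioo (by linarith) (by linarith)
    have hmono : ∫ u in Ioo (x + y/16) (x + y/8), |u| ^ α ≤
        ∫ u in Ioo (x - y/4) (x + y/4), |u| ^ α :=
      setIntegral_mono_set (absRpow_IOn hα _ _)
        (Eventually.of_forall fun u => Real.rpow_nonneg (abs_nonneg u) α)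
        (HasSubset.Subset.eventuallyLE hsub)
    have hlow : ∀ K : ℝ, (∀ u ∈ Ioo (x + y/16) (x + y/8), K ≤ |u| ^ α) →
        K * (y/16) ≤ ∫ u in Ioo (x + y/16) (x + y/8), |u| ^ α := by
      intro K hK
      have := setIntegral_ge_of_const_le_real (μ := volume) measurableSet_Ioo
        (by rw [Real.volume_Ioo]; exact ENNReal.ofReal_ne_top) hK (absRpow_IOn hα _ _)
      rw [Real.volume_real_Ioo, max_eq_left (by linarith)] at this
      calc K * (y/16) = K * (x + y/8 - (x + y/16)) := by ring_nf
        _ ≤ _ := this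
    rcases le_or_gt x (2*y) with hcase | hcase
    · -- Case A : x ≤ 2y
      have hbig : ∫ u in Ioo (x - y) (x + y), |u| ^ α ≤ 2 * (3*y) ^ (α+1) / (α+1) := by
        rw [← absRpow_symm_eval hα (R := 3*y) (by linarith)]
        have h1 : -(3*y) = -(3*y) := rfl
        refine setIntegral_mono_set (absRpow_IOn hα _ _)
          (Eventually.of_forall fun u => Real.rpow_nonneg (abs_nonneg u) α)
          (HasSubset.Subset.eventuallyLE (Ioo_subset_Ioo (by linarith) (by linarith)))
      have hsmall : y ^ α * mA * (y/16) ≤ ∫ u in Ioo (x + y/16) (x + y/8), |u| ^ α := by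
        refine hlow _ fun u hu => ?_
        have hu0 : 0 < u := lt_of_le_of_lt (by linarith : (0:ℝ) ≤ x + y/16) hu.1
        rw [abs_of_pos hu0]
        exact rpow_low (1/16) 3 y u (by norm_num) hy (by nlinarith [hu.1]) (by nlinarith [hu.2])
      have hcalc : cA * (2 * (3*y) ^ (α+1) / (α+1)) = y ^ α * mA * (y/16) := by
        rw [hcA, Real.mul_rpow (by norm_num) hy.le, Real.rpow_add hy, Real.rpow_one]
        field_simp
        ring
      calc c * ∫ u in Ioo (x - y) (x + y), |u| ^ α
          ≤ cA * ∫ u in Ioo (x - y) (x + y), |u| ^ α :=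
            mul_le_mul_of_nonneg_right ((min_le_left _ _).trans (min_le_left _ _)) (hnn _ _)
        _ ≤ cA * (2 * (3*y) ^ (α+1) / (α+1)) := mul_le_mul_of_nonneg_left hbig hcA0.le
        _ = y ^ α * mA * (y/16) := hcalc
        _ ≤ ∫ u in Ioo (x + y/16) (x + y/8), |u| ^ α := hsmall
        _ ≤ _ := hmono
    · -- Case B : 2y < x
      have hx0 : 0 < x := by linarith
      have hbig : ∫ u in Ioo (x - y) (x + y), |u| ^ α ≤ x ^ α * MB * (2*y) := by
        have hptw : ∀ u ∈ Ioo (x - y) (x + y), |u| ^ α ≤ x ^ α * MB := by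
          intro u hu
          have hu0 : 0 < u := by nlinarith [hu.1]
          rw [abs_of_pos hu0]
          exact rpow_high (1/2) (3/2) x u (by norm_num) hx0
            (by nlinarith [hu.1]) (by nlinarith [hu.2])
        have hmon : ∫ u in Ioo (x - y) (x + y), |u| ^ α ≤
            ∫ _ in Ioo (x - y) (x + y), (x ^ α * MB) :=
          setIntegral_mono_on (absRpow_IOn hα (x - y) (x + y))
            (integrableOn_const (C := x ^ α * MB)
              (by rw [Real.volume_Ioo]; exact ENNReal.ofReal_ne_top))
            measurableSet_Ioo hptw
        calc ∫ u in Ioo (x - y) (x + y), |u| ^ α ≤ ∫ _ in Ioo (x - y) (x + y),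
            (x ^ α * MB) := hmon
        _ = (volume (Ioo (x - y) (x + y))).toReal • (x ^ α * MB) := setIntegral_const _
        _ = x ^ α * MB * (2*y) := by
            rw [Real.volume_Ioo, ENNReal.toReal_ofReal (by linarith)]
            rw [smul_eq_mul]; ring
      have hsmall : x ^ α * mB * (y/16) ≤ ∫ u in Ioo (x + y/16) (x + y/8), |u| ^ α := by
        refine hlow _ fun u hu => ?_
        have hu0 : 0 < u := by nlinarith [hu.1]
        rw [abs_of_pos hu0]
        exact rpow_low (1/2) (3/2) x u (by norm_num) hx0
          (by nlinarith [hu.1]) (by nlinarith [hu.2])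
      have hcalc : cB * (x ^ α * MB * (2*y)) ≤ x ^ α * mB * (y/16) := by
        rw [hcB]
        have : mB / (32 * MB) * (x ^ α * MB * (2*y)) = x ^ α * mB * (y/16) := by
          field_simp
          ring
        linarith [this]
      calc c * ∫ u in Ioo (x - y) (x + y), |u| ^ α
          ≤ cB * ∫ u in Ioo (x - y) (x + y), |u| ^ α :=
            mul_le_mul_of_nonneg_right ((min_le_left _ _).trans (min_le_right _ _)) (hnn _ _)
        _ ≤ cB * (x ^ α * MB * (2*y)) := mul_le_mul_of_nonneg_left hbig hcB0.le
        _ ≤ x ^ α * mB * (y/16) := hcalc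
        _ ≤ ∫ u in Ioo (x + y/16) (x + y/8), |u| ^ α := hsmall
        _ ≤ _ := hmono
  intro x y hy
  rcases le_total 0 x with hx | hx
  · exact key x y hx hy
  · have := key (-x) y (by linarith) hy
    rwa [ball_refl, ball_refl] at this


theorem stmt13 (p α : ℝ) (hp : 1 ≤ p) (hα : -1 < α) (C : ℝ) (hC : 0 < C) :
    ∃ C' > (0:ℝ), ∀ (f : ℂ → ℂ) (N : ℝ), 0 ≤ N → DifferentiableOn ℂ f UHP →
      (∀ z ∈ UHP, ‖f z‖ ≤ C * (∫ u in Metric.ball z.re z.im, |u| ^ α) ^ (-(1 / p)) * N) →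
      ∀ z ∈ UHP, ‖deriv f z‖ ≤
        C' * z.im⁻¹ * (∫ u in Metric.ball z.re z.im, |u| ^ α) ^ (-(1 / p)) * N := by
  obtain ⟨c, hc0, hc1, hdb⟩ := doubling hα
  refine ⟨2 * C / c, by positivity, ?_⟩
  intro f N hN hfd hbound z hz
  have hy : 0 < z.im := hz
  have hr : 0 < z.im / 2 := by linarith
  set I : ℝ := ∫ u in Metric.ball z.re z.im, |u| ^ α with hI
  have hIpos : 0 < I := by
    rw [hI, ball_int_eq]; exact absRpow_pos hα (by linarith)
  have hp0 : 0 < p := lt_of_lt_of_le zero_lt_one hp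
  have hIrn : 0 ≤ I ^ (-(1/p)) := Real.rpow_nonneg hIpos.le _
  have hsphere : ∀ w ∈ Metric.sphere z (z.im / 2),
      ‖f w‖ ≤ C * (c⁻¹ * I ^ (-(1/p))) * N := by
    intro w hw
    have hdist : ‖w - z‖ = z.im / 2 := by
      rwa [Metric.mem_sphere, Complex.dist_eq] at hw
    have him : |(w - z).im| ≤ z.im / 2 := hdist ▸ Complex.abs_im_le_norm _
    have hwim : z.im / 2 ≤ w.im := by
      rw [Complex.sub_im, abs_le] at him
      linarith [him.1]
    have hwUHP : w ∈ UHP := show 0 < w.im by linarith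
    have hsq : (w.re - z.re)^2 + (w.im - z.im)^2 = (z.im/2)^2 := by
      have h2 := Complex.sq_norm (w - z)
      rw [hdist, Complex.normSq_apply, Complex.sub_re, Complex.sub_im] at h2
      nlinarith [h2]
    have hcont : Ioo (z.re - z.im/4) (z.re + z.im/4) ⊆ Metric.ball w.re w.im := by
      rw [Real.ball_eq_Ioo]
      apply Ioo_subset_Ioo
      · nlinarith [sq_nonneg ((w.re - z.re) + (w.im - z.im))]
      · nlinarith [sq_nonneg ((w.re - z.re) - (w.im - z.im))]
    have hIw : c * I ≤ ∫ u in Metric.ball w.re w.im, |u| ^ α := by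
      refine le_trans (hdb z.re z.im hy) ?_
      rw [ball_int_eq z.re, ball_int_eq w.re]
      exact setIntegral_mono_set (absRpow_IOn hα _ _)
        (Eventually.of_forall fun u => Real.rpow_nonneg (abs_nonneg u) α)
        (HasSubset.Subset.eventuallyLE (by
          intro u hu
          have := hcont hu
          rwa [Real.ball_eq_Ioo] at this))
    have h1 : (∫ u in Metric.ball w.re w.im, |u| ^ α) ^ (-(1/p)) ≤ (c * I) ^ (-(1/p)) :=
      Real.rpow_le_rpow_of_nonpos (by positivity) hIw (by
        simp only [neg_nonpos]; positivity)
    have h2 : (c * I) ^ (-(1/p)) = c ^ (-(1/p)) * I ^ (-(1/p)) :=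
      Real.mul_rpow hc0.le hIpos.le
    have h3 : c ^ (-(1/p)) ≤ c⁻¹ := by
      rw [← Real.rpow_neg_one c]
      refine Real.rpow_le_rpow_of_exponent_ge hc0 hc1 ?_
      have h1p : 1/p ≤ 1 := by
        rw [div_le_one hp0]; exact hp
      linarith
    calc ‖f w‖ ≤ C * (∫ u in Metric.ball w.re w.im, |u| ^ α) ^ (-(1/p)) * N :=
          hbound w hwUHP
      _ ≤ C * (c⁻¹ * I ^ (-(1/p))) * N := by
          refine mul_le_mul_of_nonneg_right (mul_le_mul_of_nonneg_left ?_ hC.le) hN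
          calc (∫ u in Metric.ball w.re w.im, |u| ^ α) ^ (-(1/p))
              ≤ c ^ (-(1/p)) * I ^ (-(1/p)) := h2 ▸ h1
            _ ≤ c⁻¹ * I ^ (-(1/p)) := mul_le_mul_of_nonneg_right h3 hIrn
  have hdiff : DiffContOnCl ℂ f (Metric.ball z (z.im / 2)) := by
    apply DifferentiableOn.diffContOnCl
    apply hfd.mono
    rw [_root_.closure_ball z hr.ne']
    intro w hw
    have him : |(w - z).im| ≤ z.im / 2 := by
      have := Complex.abs_im_le_norm (w - z)
      have hd : ‖w - z‖ ≤ z.im / 2 := by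
        rwa [Metric.mem_closedBall, Complex.dist_eq] at hw
      linarith
    rw [Complex.sub_im, abs_le] at him
    show 0 < w.im
    linarith [him.1]
  have hmain := Complex.norm_deriv_le_of_forall_mem_sphere_norm_le hr hdiff hsphere
  refine hmain.trans (le_of_eq ?_)
  field_simp
end
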